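/- Assume (A1)–(A3): F : ℝ^d → ℝ is convex, differentiable with L-Lipschitz gradient; H : P2(ℝ^d) → ℝ ∪ {+∞} is proper, lower semicontinuous with respect to W2, and convex along generalized geodesics, with dom(H) ⊆ P2^r(ℝ^d); and argmin G ≠ ∅, where G(μ) = ∫ F dμ + H(μ). Let {ε_n} ⊂ ℝ_{≥0} with ∑_n ε_n < ∞ and let {τ_n} ⊂ (0, 1/L) with sup_i τ_i < 1/L. Let {μ_n} ⊂ P2(ℝ^d) satisfy W2(μ_{n+1}, T_{τ_n}(μ_n)) ≤ ε_n for all n, where T_τ(μ) = J_{τ,H}((I − τ∇F)_# μ) and J_{τ,H}(η) is the unique minimizer of ν ↦ H(ν) + (1/(2τ)) W2²(ν, η). Then for every ν ∈ argmin G the sequences {W2(μ_n, ν)} and {W2(T_{τ_n}(μ_n), ν)} converge in ℝ, there exists C > 0 with W2²(μ_{n+1}, ν) ≤ W2²(T_{τ_n}(μ_n), ν) + C ε_n for all n, and W2(T_{τ_n}(μ_n), μ_n) → 0 as n → ∞. -/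

import Mathlib

open MeasureTheory Filter Topology ENNReal

noncomputable section

/-- Euclidean space ℝ^d. -/
abbrev Ed (d : ℕ) := EuclideanSpace ℝ (Fin d)

/-- `P2 d`: Borel probability measures on ℝ^d with finite second moment. -/
def P2 (d : ℕ) : Set (Measure (Ed d)) :=
  {μ | IsProbabilityMeasure μ ∧ ∫⁻ x, ENNReal.ofReal (‖x‖ ^ 2) ∂μ < ⊤}

/-- A coupling of `μ` and `ν`. -/
def IsCoupling {d : ℕ} (γ : Measure (Ed d × Ed d)) (μ ν : Measure (Ed d)) : Prop :=
  IsProbabilityMeasure γ ∧ γ.map Prod.fst = μ ∧ γ.map Prod.snd = ν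

/-- `p`-th power transport cost of a plan `γ`. -/
def Wcost {d : ℕ} (p : ℝ) (γ : Measure (Ed d × Ed d)) : ℝ≥0∞ :=
  ∫⁻ z, ENNReal.ofReal (‖z.1 - z.2‖ ^ p) ∂γ

/-- Minimal `p`-th power transport cost between `μ` and `ν`. -/
def minCost {d : ℕ} (p : ℝ) (μ ν : Measure (Ed d)) : ℝ≥0∞ :=
  ⨅ γ : {γ : Measure (Ed d × Ed d) // IsCoupling γ μ ν}, Wcost p γ.1

/-- The `p`-Wasserstein distance. -/
def Wp {d : ℕ} (p : ℝ) (μ ν : Measure (Ed d)) : ℝ :=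
  (minCost p μ ν ^ (1 / p)).toReal

/-- The 2-Wasserstein distance. -/
def W2 {d : ℕ} (μ ν : Measure (Ed d)) : ℝ := Wp 2 μ ν

/-- Optimal transport plan for the quadratic cost. -/
def IsOptimalPlan {d : ℕ} (γ : Measure (Ed d × Ed d)) (μ ν : Measure (Ed d)) : Prop :=
  IsCoupling γ μ ν ∧ Wcost 2 γ = minCost 2 μ ν

/-- `curve` is a generalized geodesic between `μ0` and `μ1` with base `base`. -/
def IsGenGeodesic {d : ℕ} (curve : ℝ → Measure (Ed d))
    (μ0 μ1 base : Measure (Ed d)) : Prop :=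
  ∃ γ : Measure (Ed d × Ed d × Ed d),
    IsProbabilityMeasure γ ∧
    IsOptimalPlan (γ.map (fun z => (z.1, z.2.1))) base μ0 ∧
    IsOptimalPlan (γ.map (fun z => (z.1, z.2.2))) base μ1 ∧
    ∀ t ∈ Set.Icc (0 : ℝ) 1,
      curve t = γ.map (fun z => (1 - t) • z.2.1 + t • z.2.2)

/-- Convexity along generalized geodesics. -/
def ConvexAlongGenGeod {d : ℕ} (G : Measure (Ed d) → EReal) : Prop :=
  ∀ μ0 ∈ P2 d, ∀ μ1 ∈ P2 d, ∀ base ∈ P2 d,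
    ∃ curve : ℝ → Measure (Ed d), IsGenGeodesic curve μ0 μ1 base ∧
      ∀ t ∈ Set.Icc (0 : ℝ) 1,
        G (curve t) ≤ ((1 - t : ℝ) : EReal) * G μ0 + ((t : ℝ) : EReal) * G μ1

/-- `G` is proper: never `⊥` and finite somewhere on `P2`. -/
def ProperOn {d : ℕ} (G : Measure (Ed d) → EReal) : Prop :=
  (∀ μ, G μ ≠ ⊥) ∧ ∃ μ ∈ P2 d, G μ ≠ ⊤

/-- Sequential lower semicontinuity with respect to `W2`. -/
def LscW2 {d : ℕ} (G : Measure (Ed d) → EReal) : Prop :=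
  ∀ μ ∈ P2 d, ∀ s : ℕ → Measure (Ed d), (∀ n, s n ∈ P2 d) →
    Tendsto (fun n => W2 (s n) μ) atTop (𝓝 0) →
    G μ ≤ liminf (fun n => G (s n)) atTop

/-- The JKO (Moreau–Yosida) energy `ν ↦ G ν + (1/(2τ)) W2²(ν, μ)`. -/
def JKOEnergy {d : ℕ} (G : Measure (Ed d) → EReal) (τ : ℝ)
    (μ ν : Measure (Ed d)) : EReal :=
  G ν + ((1 / (2 * τ) * (W2 ν μ) ^ 2 : ℝ) : EReal)

/-- `ν` is a minimizer over `P2` of the JKO energy with base point `μ`. -/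
def IsJKOMin {d : ℕ} (G : Measure (Ed d) → EReal) (τ : ℝ)
    (μ ν : Measure (Ed d)) : Prop :=
  ν ∈ P2 d ∧ ∀ ρ ∈ P2 d, JKOEnergy G τ μ ν ≤ JKOEnergy G τ μ ρ

/-- `μ` is a global minimizer of `G` over `P2`. -/
def IsArgminG {d : ℕ} (G : Measure (Ed d) → EReal) (μ : Measure (Ed d)) : Prop :=
  μ ∈ P2 d ∧ ∀ ν ∈ P2 d, G μ ≤ G ν

/-- The infimum of `G` over `P2`. -/
def infG {d : ℕ} (G : Measure (Ed d) → EReal) : EReal := sInf (G '' P2 d)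

/-- Convergence in the topology `τ_{w,2}`: integrals of continuous functions with
subquadratic growth converge. -/
def TendstoWeak2 {d : ℕ} (s : ℕ → Measure (Ed d)) (μ : Measure (Ed d)) : Prop :=
  ∀ f : Ed d → ℝ, Continuous f →
    Tendsto (fun x => f x / (1 + ‖x‖ ^ 2)) (comap (fun x : Ed d => ‖x‖) atTop) (𝓝 0) →
    Tendsto (fun n => ∫ x, f x ∂(s n)) atTop (𝓝 (∫ x, f x ∂μ))

/-- Narrow convergence: integrals of bounded continuous functions converge. -/
def TendstoNarrow {d : ℕ} (s : ℕ → Measure (Ed d)) (μ : Measure (Ed d)) : Prop :=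
  ∀ f : Ed d → ℝ, Continuous f → (∃ M, ∀ x, |f x| ≤ M) →
    Tendsto (fun n => ∫ x, f x ∂(s n)) atTop (𝓝 (∫ x, f x ∂μ))

/-- The pushforward by the explicit gradient step `x ↦ x - τ ∇F(x)`. -/
def gradStep {d : ℕ} (f' : Ed d → Ed d) (τ : ℝ) (μ : Measure (Ed d)) : Measure (Ed d) :=
  μ.map (fun x => x - τ • f' x)

/-- The composite objective `G(μ) = ∫ F dμ + H(μ)`. -/
def Gsum {d : ℕ} (F : Ed d → ℝ) (H : Measure (Ed d) → EReal)
    (μ : Measure (Ed d)) : EReal :=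
  ((∫ x, F x ∂μ : ℝ) : EReal) + H μ

end
section W2Basics
open MeasureTheory Filter Topology ENNReal
variable {d : ℕ}

lemma rpow_two_eq (x : ℝ) : x ^ (2:ℝ) = x ^ 2 := by
  rw [show (2:ℝ) = ((2:ℕ):ℝ) by norm_cast, Real.rpow_natCast]

lemma wcost_two (γ : Measure (Ed d × Ed d)) :
    Wcost 2 γ = ∫⁻ z, ENNReal.ofReal (‖z.1 - z.2‖ ^ 2) ∂γ := by
  unfold Wcost; congr 1; funext z; rw [rpow_two_eq]

lemma meas_cost : Measurable (fun z : Ed d × Ed d => ENNReal.ofReal (‖z.1 - z.2‖ ^ 2)) := by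
  apply ENNReal.measurable_ofReal.comp
  exact ((continuous_fst.sub continuous_snd).norm.pow 2).measurable

/-- second moment -/
noncomputable def m2 (μ : Measure (Ed d)) : ℝ≥0∞ := ∫⁻ x, ENNReal.ofReal (‖x‖ ^ 2) ∂μ

lemma mem_P2_iff {μ : Measure (Ed d)} : μ ∈ P2 d ↔ IsProbabilityMeasure μ ∧ m2 μ < ⊤ :=
  Iff.rfl

lemma meas_norm_sq : Measurable (fun x : Ed d => ENNReal.ofReal (‖x‖ ^ 2)) :=
  ENNReal.measurable_ofReal.comp (continuous_norm.pow 2).measurable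

lemma sq_norm_sub_le (a b : Ed d) : ‖a - b‖ ^ 2 ≤ 2 * ‖a‖ ^ 2 + 2 * ‖b‖ ^ 2 := by
  have h := norm_sub_le a b
  have h2 : ‖a - b‖ ^ 2 ≤ (‖a‖ + ‖b‖) ^ 2 := by
    apply pow_le_pow_left₀ (norm_nonneg _) h
  nlinarith [norm_nonneg a, norm_nonneg b, sq_nonneg (‖a‖ - ‖b‖)]

lemma ofReal_sq_sub_le (a b : Ed d) :
    ENNReal.ofReal (‖a - b‖ ^ 2) ≤ 2 * ENNReal.ofReal (‖a‖ ^ 2) + 2 * ENNReal.ofReal (‖b‖ ^ 2) := by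
  calc ENNReal.ofReal (‖a - b‖ ^ 2) ≤ ENNReal.ofReal (2 * ‖a‖ ^ 2 + 2 * ‖b‖ ^ 2) :=
        ENNReal.ofReal_le_ofReal (sq_norm_sub_le a b)
    _ ≤ _ := by
        rw [ENNReal.ofReal_add (by positivity) (by positivity),
          ENNReal.ofReal_mul (by norm_num), ENNReal.ofReal_mul (by norm_num)]
        simp

lemma IsCoupling.lintegral_fst {γ : Measure (Ed d × Ed d)} {μ ν : Measure (Ed d)}
    (h : IsCoupling γ μ ν) (f : Ed d → ℝ≥0∞) (hf : Measurable f) :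
    ∫⁻ z, f z.1 ∂γ = ∫⁻ x, f x ∂μ := by
  rw [← h.2.1, lintegral_map hf measurable_fst]

lemma IsCoupling.lintegral_snd {γ : Measure (Ed d × Ed d)} {μ ν : Measure (Ed d)}
    (h : IsCoupling γ μ ν) (f : Ed d → ℝ≥0∞) (hf : Measurable f) :
    ∫⁻ z, f z.2 ∂γ = ∫⁻ x, f x ∂ν := by
  rw [← h.2.2, lintegral_map hf measurable_snd]

lemma wcost_le_m2 {γ : Measure (Ed d × Ed d)} {μ ν : Measure (Ed d)}
    (h : IsCoupling γ μ ν) : Wcost 2 γ ≤ 2 * m2 μ + 2 * m2 ν := by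
  rw [wcost_two]
  calc ∫⁻ z, ENNReal.ofReal (‖z.1 - z.2‖ ^ 2) ∂γ
      ≤ ∫⁻ z, (2 * ENNReal.ofReal (‖z.1‖ ^ 2) + 2 * ENNReal.ofReal (‖z.2‖ ^ 2)) ∂γ :=
        lintegral_mono fun z => ofReal_sq_sub_le _ _
    _ = 2 * m2 μ + 2 * m2 ν := by
        have m1 : Measurable fun z : Ed d × Ed d => ENNReal.ofReal (‖z.1‖ ^ 2) :=
          meas_norm_sq.comp measurable_fst
        have m2' : Measurable fun z : Ed d × Ed d => ENNReal.ofReal (‖z.2‖ ^ 2) :=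
          meas_norm_sq.comp measurable_snd
        rw [lintegral_add_left (m1.const_mul 2), lintegral_const_mul 2 m1,
          lintegral_const_mul 2 m2', h.lintegral_fst _ meas_norm_sq,
          h.lintegral_snd _ meas_norm_sq]
        rfl

lemma isCoupling_prod {μ ν : Measure (Ed d)} (hμ : IsProbabilityMeasure μ)
    (hν : IsProbabilityMeasure ν) : IsCoupling (μ.prod ν) μ ν := by
  refine ⟨by infer_instance, ?_, ?_⟩
  · rw [Measure.map_fst_prod]; simp
  · rw [Measure.map_snd_prod]; simp

lemma minCost_le_wcost {γ : Measure (Ed d × Ed d)} {μ ν : Measure (Ed d)}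
    (h : IsCoupling γ μ ν) : minCost 2 μ ν ≤ Wcost 2 γ := iInf_le (fun γ : {γ : Measure (Ed d × Ed d) // IsCoupling γ μ ν} => Wcost 2 γ.1) ⟨γ, h⟩

lemma minCost_lt_top {μ ν : Measure (Ed d)} (hμ : μ ∈ P2 d) (hν : ν ∈ P2 d) :
    minCost 2 μ ν < ⊤ :=
  lt_of_le_of_lt (minCost_le_wcost (isCoupling_prod hμ.1 hν.1))
    (lt_of_le_of_lt (wcost_le_m2 (isCoupling_prod hμ.1 hν.1))
      (by
        have h1 := hμ.2; have h2 := hν.2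
        exact ENNReal.add_lt_top.2 ⟨ENNReal.mul_lt_top (by norm_num) h1,
          ENNReal.mul_lt_top (by norm_num) h2⟩))

lemma IsCoupling.swap {γ : Measure (Ed d × Ed d)} {μ ν : Measure (Ed d)}
    (h : IsCoupling γ μ ν) : IsCoupling (γ.map Prod.swap) ν μ := by
  have hm : Measurable (Prod.swap : Ed d × Ed d → Ed d × Ed d) := measurable_swap
  have : IsProbabilityMeasure γ := h.1
  refine ⟨Measure.isProbabilityMeasure_map hm.aemeasurable, ?_, ?_⟩
  · rw [Measure.map_map measurable_fst hm]; exact h.2.2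
  · rw [Measure.map_map measurable_snd hm]; exact h.2.1

lemma wcost_swap (γ : Measure (Ed d × Ed d)) :
    Wcost 2 (γ.map Prod.swap) = Wcost 2 γ := by
  rw [wcost_two, wcost_two, lintegral_map meas_cost measurable_swap]
  congr 1; funext z; rw [norm_sub_rev]; rfl

lemma minCost_symm (μ ν : Measure (Ed d)) : minCost 2 μ ν = minCost 2 ν μ := by
  have key : ∀ μ' ν' : Measure (Ed d), minCost 2 ν' μ' ≤ minCost 2 μ' ν' := by
    intro μ' ν'
    refine le_iInf fun γ => ?_
    calc minCost 2 ν' μ' ≤ Wcost 2 (γ.1.map Prod.swap) := minCost_le_wcost γ.2.swap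
      _ = Wcost 2 γ.1 := wcost_swap _
  exact le_antisymm (key ν μ) (key μ ν)

lemma W2_nonneg (μ ν : Measure (Ed d)) : 0 ≤ W2 μ ν := ENNReal.toReal_nonneg

lemma W2_symm (μ ν : Measure (Ed d)) : W2 μ ν = W2 ν μ := by
  unfold W2 Wp; rw [minCost_symm]

lemma W2_eq_rpow (μ ν : Measure (Ed d)) :
    W2 μ ν = (minCost 2 μ ν).toReal ^ (1/2 : ℝ) := by
  unfold W2 Wp; rw [ENNReal.toReal_rpow]

lemma sq_W2 (μ ν : Measure (Ed d)) : W2 μ ν ^ 2 = (minCost 2 μ ν).toReal := by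
  rw [W2_eq_rpow, ← Real.rpow_natCast ((minCost 2 μ ν).toReal ^ (1/2:ℝ)) 2,
    ← Real.rpow_mul ENNReal.toReal_nonneg]
  norm_num

lemma W2_sq_le_cost {γ : Measure (Ed d × Ed d)} {μ ν : Measure (Ed d)}
    (h : IsCoupling γ μ ν) (hfin : Wcost 2 γ ≠ ⊤) :
    W2 μ ν ^ 2 ≤ (Wcost 2 γ).toReal := by
  rw [sq_W2]; exact ENNReal.toReal_mono hfin (minCost_le_wcost h)

lemma cost_le_W2_sq {γ : Measure (Ed d × Ed d)} {μ ν : Measure (Ed d)}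
    (h : IsCoupling γ μ ν) (hμν : minCost 2 μ ν ≠ ⊤)
    (hle : Wcost 2 γ ≤ minCost 2 μ ν) : (Wcost 2 γ).toReal ≤ W2 μ ν ^ 2 := by
  rw [sq_W2]; exact ENNReal.toReal_mono hμν hle

lemma exists_near_opt {μ ν : Measure (Ed d)} (hμ : μ ∈ P2 d) (hν : ν ∈ P2 d)
    {δ : ℝ} (hδ : 0 < δ) :
    ∃ γ : Measure (Ed d × Ed d), IsCoupling γ μ ν ∧
      Wcost 2 γ ≤ minCost 2 μ ν + ENNReal.ofReal δ ∧ Wcost 2 γ < ⊤ := by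
  have hfin := minCost_lt_top hμ hν
  have hlt : minCost 2 μ ν < minCost 2 μ ν + ENNReal.ofReal δ :=
    ENNReal.lt_add_right hfin.ne (by simpa using (ENNReal.ofReal_pos.2 hδ).ne')
  rw [minCost, iInf_lt_iff] at hlt
  obtain ⟨⟨γ, hγ⟩, h⟩ := hlt
  exact ⟨γ, hγ, h.le, h.trans (ENNReal.add_lt_top.2 ⟨hfin, ENNReal.ofReal_lt_top⟩)⟩

end W2Basics
section Glue
open MeasureTheory Filter Topology ENNReal ProbabilityTheory
variable {d : ℕ}

lemma ofReal_sq_le_two_two {r s u : ℝ} (h : r ≤ s + u) (hr : 0 ≤ r) :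
    ENNReal.ofReal (r ^ 2) ≤ 2 * ENNReal.ofReal (s ^ 2) + 2 * ENNReal.ofReal (u ^ 2) := by
  have h2 : r ^ 2 ≤ 2 * s ^ 2 + 2 * u ^ 2 := by nlinarith [sq_nonneg (s - u), sq_nonneg (s + u)]
  calc ENNReal.ofReal (r ^ 2) ≤ ENNReal.ofReal (2 * s ^ 2 + 2 * u ^ 2) :=
        ENNReal.ofReal_le_ofReal h2
    _ ≤ _ := by
        rw [ENNReal.ofReal_add (by positivity) (by positivity),
          ENNReal.ofReal_mul (by norm_num), ENNReal.ofReal_mul (by norm_num)]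
        simp

/-- general two-marginal moment computation -/
lemma lintegral_pair_moment {α : Type*} [MeasurableSpace α] (γ : Measure α)
    {g h : α → Ed d} (hg : Measurable g) (hh : Measurable h)
    {μ0 μ1 : Measure (Ed d)} (hgm : γ.map g = μ0) (hhm : γ.map h = μ1) :
    ∫⁻ z, (2 * ENNReal.ofReal (‖g z‖ ^ 2) + 2 * ENNReal.ofReal (‖h z‖ ^ 2)) ∂γ
      = 2 * m2 μ0 + 2 * m2 μ1 := by
  have m1 : Measurable fun z => ENNReal.ofReal (‖g z‖ ^ 2) := meas_norm_sq.comp hg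
  have m2' : Measurable fun z => ENNReal.ofReal (‖h z‖ ^ 2) := meas_norm_sq.comp hh
  rw [lintegral_add_left (m1.const_mul 2), lintegral_const_mul 2 m1, lintegral_const_mul 2 m2']
  rw [show ∫⁻ z, ENNReal.ofReal (‖g z‖ ^ 2) ∂γ = m2 μ0 by
      rw [← hgm, m2, lintegral_map meas_norm_sq hg],
    show ∫⁻ z, ENNReal.ofReal (‖h z‖ ^ 2) ∂γ = m2 μ1 by
      rw [← hhm, m2, lintegral_map meas_norm_sq hh]]

lemma mem_P2_of_marginals {α : Type*} [MeasurableSpace α] {γ : Measure α}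
    (hγ : IsProbabilityMeasure γ) {g h f : α → Ed d}
    (hg : Measurable g) (hh : Measurable h) (hf : Measurable f)
    {μ0 μ1 : Measure (Ed d)} (hgm : γ.map g = μ0) (hhm : γ.map h = μ1)
    (h0 : μ0 ∈ P2 d) (h1 : μ1 ∈ P2 d)
    (hbound : ∀ z, ‖f z‖ ≤ ‖g z‖ + ‖h z‖) : γ.map f ∈ P2 d := by
  refine ⟨Measure.isProbabilityMeasure_map hf.aemeasurable, ?_⟩
  have : m2 (γ.map f) = ∫⁻ z, ENNReal.ofReal (‖f z‖ ^ 2) ∂γ := by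
    rw [m2, lintegral_map meas_norm_sq hf]
  rw [mem_P2_iff] at h0 h1
  calc m2 (γ.map f) = ∫⁻ z, ENNReal.ofReal (‖f z‖ ^ 2) ∂γ := this
    _ ≤ ∫⁻ z, (2 * ENNReal.ofReal (‖g z‖ ^ 2) + 2 * ENNReal.ofReal (‖h z‖ ^ 2)) ∂γ :=
        lintegral_mono fun z => ofReal_sq_le_two_two (hbound z) (norm_nonneg _)
    _ = 2 * m2 μ0 + 2 * m2 μ1 := lintegral_pair_moment γ hg hh hgm hhm
    _ < ⊤ := ENNReal.add_lt_top.2 ⟨ENNReal.mul_lt_top (by norm_num) h0.2,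
        ENNReal.mul_lt_top (by norm_num) h1.2⟩

/-- membership in P2 for a pushforward with linear growth -/
lemma map_mem_P2_of_linear_growth {μ : Measure (Ed d)} (hμ : μ ∈ P2 d)
    {f : Ed d → Ed d} (hf : Measurable f) {a b : ℝ}
    (hgrow : ∀ x, ‖f x‖ ≤ a + b * ‖x‖) : μ.map f ∈ P2 d := by
  have hμp : IsProbabilityMeasure μ := hμ.1
  -- use mem_P2_of_marginals with g = const a', h = b‖x‖ trick: instead direct
  refine ⟨Measure.isProbabilityMeasure_map hf.aemeasurable, ?_⟩
  have : m2 (μ.map f) = ∫⁻ x, ENNReal.ofReal (‖f x‖ ^ 2) ∂μ := by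
    rw [m2, lintegral_map meas_norm_sq hf]
  have hb : ∀ x : Ed d, ENNReal.ofReal (‖f x‖ ^ 2)
      ≤ 2 * ENNReal.ofReal (a ^ 2) + 2 * ENNReal.ofReal (b ^ 2) * ENNReal.ofReal (‖x‖ ^ 2) := by
    intro x
    have h1 : ENNReal.ofReal (‖f x‖ ^ 2) ≤ 2 * ENNReal.ofReal (a ^ 2)
        + 2 * ENNReal.ofReal ((b * ‖x‖) ^ 2) :=
      ofReal_sq_le_two_two (hgrow x) (norm_nonneg _)
    have : ENNReal.ofReal ((b * ‖x‖) ^ 2) = ENNReal.ofReal (b ^ 2) * ENNReal.ofReal (‖x‖ ^ 2) := by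
      rw [mul_pow, ENNReal.ofReal_mul (by positivity)]
    rw [this, ← mul_assoc] at h1
    exact h1
  show m2 (μ.map f) < ⊤
  rw [this]
  calc ∫⁻ x, ENNReal.ofReal (‖f x‖ ^ 2) ∂μ
      ≤ ∫⁻ x, (2 * ENNReal.ofReal (a ^ 2) + 2 * ENNReal.ofReal (b ^ 2) * ENNReal.ofReal (‖x‖ ^ 2)) ∂μ :=
        lintegral_mono hb
    _ = 2 * ENNReal.ofReal (a ^ 2) + 2 * ENNReal.ofReal (b ^ 2) * m2 μ := by
        rw [lintegral_add_left measurable_const, lintegral_const,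
          lintegral_const_mul _ meas_norm_sq, measure_univ, mul_one]
        rfl
    _ < ⊤ := ENNReal.add_lt_top.2 ⟨by simp [ENNReal.mul_lt_top, ENNReal.ofReal_lt_top],
        ENNReal.mul_lt_top (by finiteness) hμ.2⟩

/-- moving a map inside a compProd -/
lemma map_compProd_right {α β γ' : Type*} [MeasurableSpace α] [MeasurableSpace β]
    [MeasurableSpace γ'] (μ : Measure α) [SFinite μ] (κ : Kernel α β) [IsSFiniteKernel κ]
    {f : β → γ'} (hf : Measurable f) :
    (μ ⊗ₘ κ).map (fun p => (p.1, f p.2)) = μ ⊗ₘ (κ.map f) := by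
  have hm : Measurable fun p : α × β => (p.1, f p.2) :=
    measurable_fst.prodMk (hf.comp measurable_snd)
  ext s hs
  rw [Measure.map_apply hm hs, Measure.compProd_apply (hm hs), Measure.compProd_apply hs]
  congr 1
  funext a
  rw [Kernel.map_apply' κ hf a (measurable_prodMk_left hs)]
  rfl

/-- Gluing lemma: two couplings sharing their first marginal embed in a triple plan. -/
lemma glue_first {σ π : Measure (Ed d × Ed d)} (hσ : IsProbabilityMeasure σ)
    (hπ : IsProbabilityMeasure π) (h : σ.map Prod.fst = π.map Prod.fst) :
    ∃ Γ : Measure (Ed d × Ed d × Ed d), IsProbabilityMeasure Γ ∧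
      Γ.map (fun z => (z.1, z.2.1)) = σ ∧ Γ.map (fun z => (z.1, z.2.2)) = π := by
  set κ1 := σ.condKernel
  set κ2 := π.condKernel
  refine ⟨σ.fst ⊗ₘ (κ1 ×ₖ κ2), inferInstance, ?_, ?_⟩
  · rw [show (fun z : Ed d × Ed d × Ed d => (z.1, z.2.1)) = (fun p : Ed d × (Ed d × Ed d) => (p.1, Prod.fst p.2)) from rfl,
      map_compProd_right _ _ measurable_fst,
      show (κ1 ×ₖ κ2).map Prod.fst = κ1 from by
        rw [← Kernel.fst_eq]; exact Kernel.fst_prod κ1 κ2]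
    exact σ.disintegrate κ1
  · rw [show (fun z : Ed d × Ed d × Ed d => (z.1, z.2.2)) = (fun p : Ed d × (Ed d × Ed d) => (p.1, Prod.snd p.2)) from rfl,
      map_compProd_right _ _ measurable_snd,
      show (κ1 ×ₖ κ2).map Prod.snd = κ2 from by
        rw [← Kernel.snd_eq]; exact Kernel.snd_prod κ1 κ2,
      show σ.fst = π.fst from by
        rw [Measure.fst, Measure.fst, h]]
    exact π.disintegrate κ2

/-- Pull a coupling of `(μ.map ψ, ·)` back to a coupling of `(μ, ·)`. -/
lemma pullback_coupling {μ : Measure (Ed d)} (hμ : IsProbabilityMeasure μ)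
    {ψ : Ed d → Ed d} (hψ : Measurable ψ) {κ : Measure (Ed d × Ed d)}
    (hκ : IsProbabilityMeasure κ) (hfst : κ.map Prod.fst = μ.map ψ) :
    ∃ σ : Measure (Ed d × Ed d), IsProbabilityMeasure σ ∧
      σ.map Prod.fst = μ ∧ σ.map (fun p => (ψ p.1, p.2)) = κ := by
  have hm : Measurable fun p : Ed d × Ed d => (ψ p.1, p.2) :=
    (hψ.comp measurable_fst).prodMk measurable_snd
  refine ⟨μ ⊗ₘ (κ.condKernel.comap ψ hψ), inferInstance, ?_, ?_⟩
  · show (μ ⊗ₘ (κ.condKernel.comap ψ hψ)).fst = μ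
    exact Measure.fst_compProd μ _
  · ext s hs
    rw [Measure.map_apply hm hs, Measure.compProd_apply (hm hs)]
    have h1 : ∀ a : Ed d, (κ.condKernel.comap ψ hψ) a (Prod.mk a ⁻¹' ((fun p : Ed d × Ed d => (ψ p.1, p.2)) ⁻¹' s))
        = κ.condKernel (ψ a) (Prod.mk (ψ a) ⁻¹' s) := by
      intro a; rw [Kernel.comap_apply]; rfl
    simp_rw [h1]
    rw [← lintegral_map (Kernel.measurable_kernel_prodMk_left hs) hψ, ← hfst,
      show κ.map Prod.fst = κ.fst from rfl,
      ← Measure.compProd_apply hs, κ.disintegrate κ.condKernel]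

end Glue
section Triangle
open MeasureTheory Filter Topology ENNReal ProbabilityTheory
variable {d : ℕ}

lemma wcost_map {α : Type*} [MeasurableSpace α] (γ : Measure α) {g h : α → Ed d}
    (hg : Measurable g) (hh : Measurable h) :
    Wcost 2 (γ.map (fun z => (g z, h z))) = ∫⁻ z, ENNReal.ofReal (‖g z - h z‖ ^ 2) ∂γ := by
  rw [wcost_two, lintegral_map meas_cost (hg.prodMk hh)]

lemma map_pair_coupling {α : Type*} [MeasurableSpace α] {Γ : Measure α}
    (hΓ : IsProbabilityMeasure Γ) {g h : α → Ed d} (hg : Measurable g) (hh : Measurable h)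
    {a b : Measure (Ed d)} (hga : Γ.map g = a) (hhb : Γ.map h = b) :
    IsCoupling (Γ.map (fun z => (g z, h z))) a b := by
  refine ⟨Measure.isProbabilityMeasure_map ((hg.prodMk hh).aemeasurable), ?_, ?_⟩
  · rw [Measure.map_map measurable_fst (hg.prodMk hh)]; exact hga
  · rw [Measure.map_map measurable_snd (hg.prodMk hh)]; exact hhb

lemma W2_triangle {μ1 μ2 μ3 : Measure (Ed d)} (h1 : μ1 ∈ P2 d) (h2 : μ2 ∈ P2 d)
    (h3 : μ3 ∈ P2 d) : W2 μ1 μ3 ≤ W2 μ1 μ2 + W2 μ2 μ3 := by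
  refine le_of_forall_pos_le_add fun e he => ?_
  set e' := e / 2 with he'def
  have he' : 0 < e' := by positivity
  set δ := e' ^ 2 with hδdef
  have hδ : 0 < δ := by positivity
  obtain ⟨γ12, hγ12c, hγ12, hγ12fin⟩ := exists_near_opt h1 h2 hδ
  obtain ⟨γ23, hγ23c, hγ23, hγ23fin⟩ := exists_near_opt h2 h3 hδ
  have hσc : IsCoupling (γ12.map Prod.swap) μ2 μ1 := hγ12c.swap
  have hshare : (γ12.map Prod.swap).map Prod.fst = γ23.map Prod.fst := by
    rw [hσc.2.1, hγ23c.2.1]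
  obtain ⟨Γ, hΓp, hΓ12, hΓ23⟩ := glue_first hσc.1 hγ23c.1 hshare
  -- coordinate measurability
  have hz1 : Measurable fun z : Ed d × Ed d × Ed d => z.1 := measurable_fst
  have hz21 : Measurable fun z : Ed d × Ed d × Ed d => z.2.1 := measurable_fst.comp measurable_snd
  have hz22 : Measurable fun z : Ed d × Ed d × Ed d => z.2.2 := measurable_snd.comp measurable_snd
  -- single marginals
  have hm1 : Γ.map (fun z => z.2.1) = μ1 := by
    rw [show (fun z : Ed d × Ed d × Ed d => z.2.1) = (Prod.snd ∘ fun z : Ed d × Ed d × Ed d => (z.1, z.2.1)) from rfl,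
      ← Measure.map_map measurable_snd (hz1.prodMk hz21), hΓ12, hσc.2.2]
  have hm2 : Γ.map (fun z => z.1) = μ2 := by
    rw [show (fun z : Ed d × Ed d × Ed d => z.1) = (Prod.fst ∘ fun z : Ed d × Ed d × Ed d => (z.1, z.2.1)) from rfl,
      ← Measure.map_map measurable_fst (hz1.prodMk hz21), hΓ12, hσc.2.1]
  have hm3 : Γ.map (fun z => z.2.2) = μ3 := by
    rw [show (fun z : Ed d × Ed d × Ed d => z.2.2) = (Prod.snd ∘ fun z : Ed d × Ed d × Ed d => (z.1, z.2.2)) from rfl,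
      ← Measure.map_map measurable_snd (hz1.prodMk hz22), hΓ23, hγ23c.2.2]
  -- the (1,3) coupling
  have hc13 : IsCoupling (Γ.map (fun z => (z.2.1, z.2.2))) μ1 μ3 :=
    map_pair_coupling hΓp hz21 hz22 hm1 hm3
  -- cost computations
  have hcost12 : ∫⁻ z, ENNReal.ofReal (‖z.2.1 - z.1‖ ^ 2) ∂Γ = Wcost 2 γ12 := by
    rw [← wcost_map Γ hz21 hz1]
    congr 1
    have : Γ.map (fun z => (z.2.1, z.1)) = (γ12.map Prod.swap).map Prod.swap := by
      rw [← hΓ12, Measure.map_map measurable_swap (hz1.prodMk hz21)]; rfl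
    rw [this, Measure.map_map measurable_swap measurable_swap]
    simp [Prod.swap_swap_eq]
  have hcost23 : ∫⁻ z, ENNReal.ofReal (‖z.1 - z.2.2‖ ^ 2) ∂Γ = Wcost 2 γ23 := by
    rw [← wcost_map Γ hz1 hz22, hΓ23]
  -- Minkowski
  set fE := fun z : Ed d × Ed d × Ed d => ENNReal.ofReal ‖z.2.1 - z.1‖ with hfEdef
  set gE := fun z : Ed d × Ed d × Ed d => ENNReal.ofReal ‖z.1 - z.2.2‖ with hgEdef
  have hfEm : AEMeasurable fE Γ := (ENNReal.measurable_ofReal.comp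
    ((hz21.sub hz1).norm)).aemeasurable
  have hgEm : AEMeasurable gE Γ := (ENNReal.measurable_ofReal.comp
    ((hz1.sub hz22).norm)).aemeasurable
  have hpoint : ∀ z : Ed d × Ed d × Ed d,
      ENNReal.ofReal (‖z.2.1 - z.2.2‖ ^ 2) ≤ (fE + gE) z ^ (2:ℝ) := by
    intro z
    have htri : ‖z.2.1 - z.2.2‖ ≤ ‖z.2.1 - z.1‖ + ‖z.1 - z.2.2‖ := norm_sub_le_norm_sub_add_norm_sub _ _ _
    have : (fE + gE) z = ENNReal.ofReal (‖z.2.1 - z.1‖ + ‖z.1 - z.2.2‖) := by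
      simp [hfEdef, hgEdef, ENNReal.ofReal_add (norm_nonneg _) (norm_nonneg _)]
    rw [this, ENNReal.ofReal_rpow_of_nonneg (by positivity) (by norm_num), rpow_two_eq]
    apply ENNReal.ofReal_le_ofReal
    apply pow_le_pow_left₀ (norm_nonneg _) htri
  have hmink := ENNReal.lintegral_Lp_add_le hfEm hgEm (by norm_num : (1:ℝ) ≤ 2)
  have hfE2 : ∫⁻ z, fE z ^ (2:ℝ) ∂Γ = Wcost 2 γ12 := by
    rw [← hcost12]; congr 1; funext z
    rw [hfEdef, ENNReal.ofReal_rpow_of_nonneg (norm_nonneg _) (by norm_num), rpow_two_eq]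
  have hgE2 : ∫⁻ z, gE z ^ (2:ℝ) ∂Γ = Wcost 2 γ23 := by
    rw [← hcost23]; congr 1; funext z
    rw [hgEdef, ENNReal.ofReal_rpow_of_nonneg (norm_nonneg _) (by norm_num), rpow_two_eq]
  have hchain : minCost 2 μ1 μ3 ^ (1/2 : ℝ)
      ≤ (Wcost 2 γ12) ^ (1/2:ℝ) + (Wcost 2 γ23) ^ (1/2:ℝ) := by
    calc minCost 2 μ1 μ3 ^ (1/2:ℝ) ≤ (Wcost 2 (Γ.map (fun z => (z.2.1, z.2.2)))) ^ (1/2:ℝ) :=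
          ENNReal.rpow_le_rpow (minCost_le_wcost hc13) (by norm_num)
      _ = (∫⁻ z, ENNReal.ofReal (‖z.2.1 - z.2.2‖ ^ 2) ∂Γ) ^ (1/2:ℝ) := by
          rw [wcost_map Γ hz21 hz22]
      _ ≤ (∫⁻ z, (fE + gE) z ^ (2:ℝ) ∂Γ) ^ (1/2:ℝ) :=
          ENNReal.rpow_le_rpow (lintegral_mono hpoint) (by norm_num)
      _ ≤ (∫⁻ z, fE z ^ (2:ℝ) ∂Γ) ^ (1/2:ℝ) + (∫⁻ z, gE z ^ (2:ℝ) ∂Γ) ^ (1/2:ℝ) := hmink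
      _ = _ := by rw [hfE2, hgE2]
  -- pass to near-optimality and split the δ
  have hsplit : ∀ m : ℝ≥0∞, m ≠ ⊤ → (m + ENNReal.ofReal δ) ^ (1/2:ℝ)
      ≤ m ^ (1/2:ℝ) + ENNReal.ofReal e' := by
    intro m hm
    have h := ENNReal.rpow_add_rpow_le_add (m ^ (1/2:ℝ)) ((ENNReal.ofReal δ) ^ (1/2:ℝ))
      (by norm_num : (1:ℝ) ≤ 2)
    have hme : (m ^ (1/2:ℝ)) ^ (2:ℝ) = m := by
      rw [← ENNReal.rpow_mul]; norm_num
    have hδe : ((ENNReal.ofReal δ) ^ (1/2:ℝ)) ^ (2:ℝ) = ENNReal.ofReal δ := by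
      rw [← ENNReal.rpow_mul]; norm_num
    rw [hme, hδe] at h
    refine le_trans h ?_
    gcongr
    rw [hδdef, ENNReal.ofReal_rpow_of_nonneg (by positivity) (by norm_num)]
    congr 1
    rw [← rpow_two_eq e', ← Real.rpow_mul he'.le]
    norm_num
  have hfinal : minCost 2 μ1 μ3 ^ (1/2:ℝ)
      ≤ minCost 2 μ1 μ2 ^ (1/2:ℝ) + minCost 2 μ2 μ3 ^ (1/2:ℝ)
        + (ENNReal.ofReal e' + ENNReal.ofReal e') := by
    have h12 : (Wcost 2 γ12) ^ (1/2:ℝ) ≤ minCost 2 μ1 μ2 ^ (1/2:ℝ) + ENNReal.ofReal e' :=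
      le_trans (ENNReal.rpow_le_rpow hγ12 (by norm_num)) (hsplit _ (minCost_lt_top h1 h2).ne)
    have h23 : (Wcost 2 γ23) ^ (1/2:ℝ) ≤ minCost 2 μ2 μ3 ^ (1/2:ℝ) + ENNReal.ofReal e' :=
      le_trans (ENNReal.rpow_le_rpow hγ23 (by norm_num)) (hsplit _ (minCost_lt_top h2 h3).ne)
    calc minCost 2 μ1 μ3 ^ (1/2:ℝ) ≤ _ := hchain
      _ ≤ _ := by
        refine le_trans (add_le_add h12 h23) ?_
        ring_nf
        exact le_refl _
  -- convert to reals
  have f1 : minCost 2 μ1 μ2 ^ (1/2:ℝ) ≠ ⊤ :=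
    (ENNReal.rpow_lt_top_of_nonneg (by norm_num) (minCost_lt_top h1 h2).ne).ne
  have f2 : minCost 2 μ2 μ3 ^ (1/2:ℝ) ≠ ⊤ :=
    (ENNReal.rpow_lt_top_of_nonneg (by norm_num) (minCost_lt_top h2 h3).ne).ne
  have f3 : ENNReal.ofReal e' ≠ ⊤ := ENNReal.ofReal_ne_top
  have hRHSne : minCost 2 μ1 μ2 ^ (1/2:ℝ) + minCost 2 μ2 μ3 ^ (1/2:ℝ)
      + (ENNReal.ofReal e' + ENNReal.ofReal e') ≠ ⊤ :=
    ENNReal.add_ne_top.2 ⟨ENNReal.add_ne_top.2 ⟨f1, f2⟩, ENNReal.add_ne_top.2 ⟨f3, f3⟩⟩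
  have := ENNReal.toReal_mono hRHSne hfinal
  rw [ENNReal.toReal_add (ENNReal.add_ne_top.2 ⟨f1, f2⟩) (ENNReal.add_ne_top.2 ⟨f3, f3⟩),
    ENNReal.toReal_add f1 f2, ENNReal.toReal_add f3 f3] at this
  unfold W2 Wp
  rw [ENNReal.toReal_ofReal he'.le] at this
  calc (minCost 2 μ1 μ3 ^ (1/(2:ℝ))).toReal ≤ _ := this
    _ = (minCost 2 μ1 μ2 ^ (1/(2:ℝ))).toReal + (minCost 2 μ2 μ3 ^ (1/(2:ℝ))).toReal + e := by
      rw [he'def]; ring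

end Triangle
section FCalc
open MeasureTheory Filter Topology ENNReal
variable {d : ℕ} {F : Ed d → ℝ} {f' : Ed d → Ed d} {L : ℝ}

lemma line_hasDerivAt (x v : Ed d) (hFgrad : ∀ x, HasGradientAt F (f' x) x) (t : ℝ) :
    HasDerivAt (fun s : ℝ => F (x + s • v)) (inner ℝ (f' (x + t • v)) v : ℝ) t := by
  have hline : HasDerivAt (fun s : ℝ => x + s • v) v t := by
    simpa using ((hasDerivAt_id t).smul_const v).const_add x
  have hF := (hFgrad (x + t • v)).hasFDerivAt
  have := hF.comp_hasDerivAt t hline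
  simp only [InnerProductSpace.toDual_apply_apply] at this; exact this

lemma grad_convex_ineq (hFconv : ConvexOn ℝ Set.univ F)
    (hFgrad : ∀ x, HasGradientAt F (f' x) x) (x y : Ed d) :
    F x + (inner ℝ (f' x) (y - x) : ℝ) ≤ F y := by
  set v := y - x
  set g := fun s : ℝ => F (x + s • v) with hg
  have hderiv : HasDerivAt g (inner ℝ (f' x) v : ℝ) 0 := by
    have := line_hasDerivAt x v hFgrad 0
    simpa using this
  have hslope : Tendsto (slope g 0) (𝓝[>] 0) (𝓝 (inner ℝ (f' x) v : ℝ)) :=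
    (hasDerivAt_iff_tendsto_slope.1 hderiv).mono_left
      (nhdsWithin_mono 0 fun t ht => ne_of_gt ht)
  have hbound : ∀ᶠ t in 𝓝[>] (0:ℝ), slope g 0 t ≤ F y - F x := by
    filter_upwards [Ioo_mem_nhdsGT_of_mem (by norm_num : (0:ℝ) ∈ Set.Ico 0 1)]
      with t ht
    have ht0 : 0 < t := ht.1
    have ht1 : t < 1 := ht.2
    have hconv := hFconv.2 (Set.mem_univ x) (Set.mem_univ y)
      (by linarith : (0:ℝ) ≤ 1 - t) ht0.le (by ring)
    have hxty : x + t • v = (1 - t) • x + t • y := by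
      simp [v, smul_sub, sub_smul]; abel
    have hgt : g t ≤ (1 - t) * F x + t * F y := by rw [hg]; simp only []; rw [hxty]; exact hconv
    have hg0 : g 0 = F x := by simp [hg]
    rw [slope_def_field, sub_zero, div_le_iff₀ ht0]
    nlinarith [hgt, hg0]
  have := le_of_tendsto hslope hbound
  linarith [this]

lemma lipschitz_grad_norm (hL : 0 ≤ L) (hLip : LipschitzWith L.toNNReal f') (a b : Ed d) :
    ‖f' a - f' b‖ ≤ L * ‖a - b‖ := by
  have := hLip.dist_le_mul a b
  rwa [dist_eq_norm, dist_eq_norm, Real.coe_toNNReal L hL] at this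

lemma descent_ineq (hL : 0 ≤ L) (hLip : LipschitzWith L.toNNReal f')
    (hFgrad : ∀ x, HasGradientAt F (f' x) x) (x u : Ed d) :
    F u ≤ F x + (inner ℝ (f' x) (u - x) : ℝ) + L / 2 * ‖u - x‖ ^ 2 := by
  set v := u - x with hv
  set g := fun s : ℝ => F (x + s • v) with hg
  set g' := fun s : ℝ => (inner ℝ (f' (x + s • v)) v : ℝ) with hg'
  have hcont : Continuous f' := hLip.continuous
  have hgderiv : ∀ t, HasDerivAt g (g' t) t := fun t => line_hasDerivAt x v hFgrad t
  have hg'cont : Continuous g' := by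
    apply Continuous.inner
    · exact hcont.comp (continuous_const.add (continuous_id.smul continuous_const))
    · exact continuous_const
  have hint : ∫ t in (0:ℝ)..1, g' t = g 1 - g 0 :=
    intervalIntegral.integral_deriv_eq_sub' g (funext fun t => (hgderiv t).deriv)
      (fun t _ => (hgderiv t).differentiableAt) hg'cont.continuousOn
  have hbound : ∀ t ∈ Set.uIcc (0:ℝ) 1, g' t - g' 0 ≤ L * ‖v‖ ^ 2 * t := by
    intro t ht
    rw [Set.uIcc_of_le (by norm_num : (0:ℝ) ≤ 1)] at ht
    have h1 : g' t - g' 0 = (inner ℝ (f' (x + t • v) - f' (x + (0:ℝ) • v)) v : ℝ) := by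
      rw [hg']; simp [inner_sub_left]
    have h2 : (inner ℝ (f' (x + t • v) - f' (x + (0:ℝ) • v)) v : ℝ)
        ≤ ‖f' (x + t • v) - f' (x + (0:ℝ) • v)‖ * ‖v‖ := real_inner_le_norm _ _
    have h3 : ‖f' (x + t • v) - f' (x + (0:ℝ) • v)‖ ≤ L * ‖t • v‖ := by
      have := lipschitz_grad_norm hL hLip (x + t • v) (x + (0:ℝ) • v)
      simpa using this
    have h4 : ‖t • v‖ = |t| * ‖v‖ := by rw [norm_smul]; rfl
    have h5 : |t| = t := abs_of_nonneg ht.1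
    rw [h1]
    calc (inner ℝ (f' (x + t • v) - f' (x + (0:ℝ) • v)) v : ℝ)
        ≤ ‖f' (x + t • v) - f' (x + (0:ℝ) • v)‖ * ‖v‖ := h2
      _ ≤ L * ‖t • v‖ * ‖v‖ := by
          apply mul_le_mul_of_nonneg_right h3 (norm_nonneg _)
      _ = L * ‖v‖ ^ 2 * t := by rw [h4, h5]; ring
  have hmono : ∫ t in (0:ℝ)..1, (g' t - g' 0) ≤ ∫ t in (0:ℝ)..1, L * ‖v‖ ^ 2 * t := by
    apply intervalIntegral.integral_mono_on (by norm_num)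
    · exact (hg'cont.sub continuous_const).intervalIntegrable 0 1
    · exact (continuous_const.mul continuous_id).intervalIntegrable 0 1
    · intro t ht
      exact hbound t (by rw [Set.uIcc_of_le (by norm_num : (0:ℝ) ≤ 1)]; exact ht)
  have heval : ∫ t in (0:ℝ)..1, L * ‖v‖ ^ 2 * t = L * ‖v‖ ^ 2 / 2 := by
    rw [intervalIntegral.integral_const_mul, integral_id]
    ring
  have hsub : ∫ t in (0:ℝ)..1, (g' t - g' 0) = (g 1 - g 0) - g' 0 := by
    rw [intervalIntegral.integral_sub (hg'cont.intervalIntegrable 0 1)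
      (continuous_const.intervalIntegrable 0 1), hint]
    simp
  rw [hsub, heval] at hmono
  have h1 : g 1 = F u := by simp [hg, hv]
  have h0 : g 0 = F x := by simp [hg]
  have h2 : g' 0 = (inner ℝ (f' x) v : ℝ) := by simp [hg']
  rw [h1, h0, h2] at hmono
  linarith

end FCalc
section Bridges
open MeasureTheory Filter Topology ENNReal
variable {d : ℕ} {α : Type*} [MeasurableSpace α] {Γ : Measure α}

lemma integrable_sqnorm_of_map [IsProbabilityMeasure Γ] {g : α → Ed d} (hg : Measurable g)
    {μ0 : Measure (Ed d)} (hm : Γ.map g = μ0) (h0 : μ0 ∈ P2 d) :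
    Integrable (fun z => ‖g z‖ ^ 2) Γ := by
  constructor
  · exact (hg.norm.pow_const 2).aestronglyMeasurable
  · rw [hasFiniteIntegral_iff_ofReal (Filter.Eventually.of_forall fun z => by positivity)]
    have : ∫⁻ z, ENNReal.ofReal (‖g z‖ ^ 2) ∂Γ = m2 μ0 := by
      rw [← hm, m2, lintegral_map meas_norm_sq hg]
    rw [this]; exact h0.2

lemma integrable_norm_of_map [IsProbabilityMeasure Γ] {g : α → Ed d} (hg : Measurable g)
    {μ0 : Measure (Ed d)} (hm : Γ.map g = μ0) (h0 : μ0 ∈ P2 d) :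
    Integrable (fun z => ‖g z‖) Γ := by
  have h1 : Integrable (fun z => 1 + ‖g z‖ ^ 2) Γ :=
    (integrable_const 1).add (integrable_sqnorm_of_map hg hm h0)
  refine h1.mono' hg.norm.aestronglyMeasurable ?_
  filter_upwards with z
  rw [Real.norm_eq_abs, abs_of_nonneg (norm_nonneg _)]
  nlinarith [norm_nonneg (g z), sq_nonneg (1 - ‖g z‖)]

lemma integrable_sqdist [IsProbabilityMeasure Γ] {g h : α → Ed d}
    (hg : Measurable g) (hh : Measurable h) {μ0 μ1 : Measure (Ed d)}
    (hgm : Γ.map g = μ0) (hhm : Γ.map h = μ1) (h0 : μ0 ∈ P2 d) (h1 : μ1 ∈ P2 d) :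
    Integrable (fun z => ‖g z - h z‖ ^ 2) Γ := by
  have hint : Integrable (fun z => 2 * ‖g z‖ ^ 2 + 2 * ‖h z‖ ^ 2) Γ :=
    ((integrable_sqnorm_of_map hg hgm h0).const_mul 2).add
      ((integrable_sqnorm_of_map hh hhm h1).const_mul 2)
  refine hint.mono' (((hg.sub hh).norm.pow_const 2).aestronglyMeasurable) ?_
  filter_upwards with z
  rw [Real.norm_eq_abs, abs_of_nonneg (by positivity)]
  exact sq_norm_sub_le _ _

lemma integral_sqdist_eq [IsProbabilityMeasure Γ] {g h : α → Ed d}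
    (hg : Measurable g) (hh : Measurable h) {μ0 μ1 : Measure (Ed d)}
    (hgm : Γ.map g = μ0) (hhm : Γ.map h = μ1) (h0 : μ0 ∈ P2 d) (h1 : μ1 ∈ P2 d) :
    ∫ z, ‖g z - h z‖ ^ 2 ∂Γ = (Wcost 2 (Γ.map (fun z => (g z, h z)))).toReal := by
  have hi := integrable_sqdist hg hh hgm hhm h0 h1
  have := ofReal_integral_eq_lintegral_ofReal hi
    (Filter.Eventually.of_forall fun z => by positivity)
  rw [wcost_map Γ hg hh, ← this, ENNReal.toReal_ofReal (by positivity)]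

lemma wcost_pair_ne_top [IsProbabilityMeasure Γ] {g h : α → Ed d}
    (hg : Measurable g) (hh : Measurable h) {μ0 μ1 : Measure (Ed d)}
    (hgm : Γ.map g = μ0) (hhm : Γ.map h = μ1) (h0 : μ0 ∈ P2 d) (h1 : μ1 ∈ P2 d) :
    Wcost 2 (Γ.map (fun z => (g z, h z))) ≠ ⊤ := by
  have hc := map_pair_coupling (inferInstance : IsProbabilityMeasure Γ) hg hh hgm hhm
  exact ((wcost_le_m2 hc).trans_lt (ENNReal.add_lt_top.2
    ⟨ENNReal.mul_lt_top (by norm_num) h0.2, ENNReal.mul_lt_top (by norm_num) h1.2⟩)).ne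

lemma integral_sqdist_ge [IsProbabilityMeasure Γ] {g h : α → Ed d}
    (hg : Measurable g) (hh : Measurable h) {μ0 μ1 : Measure (Ed d)}
    (hgm : Γ.map g = μ0) (hhm : Γ.map h = μ1) (h0 : μ0 ∈ P2 d) (h1 : μ1 ∈ P2 d) :
    W2 μ0 μ1 ^ 2 ≤ ∫ z, ‖g z - h z‖ ^ 2 ∂Γ := by
  rw [integral_sqdist_eq hg hh hgm hhm h0 h1, sq_W2]
  exact ENNReal.toReal_mono (wcost_pair_ne_top hg hh hgm hhm h0 h1)
    (minCost_le_wcost (map_pair_coupling inferInstance hg hh hgm hhm))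

lemma integral_sqdist_le [IsProbabilityMeasure Γ] {g h : α → Ed d}
    (hg : Measurable g) (hh : Measurable h) {μ0 μ1 : Measure (Ed d)}
    (hgm : Γ.map g = μ0) (hhm : Γ.map h = μ1) (h0 : μ0 ∈ P2 d) (h1 : μ1 ∈ P2 d)
    {δ : ℝ} (hδ : 0 ≤ δ)
    (hle : Wcost 2 (Γ.map (fun z => (g z, h z))) ≤ minCost 2 μ0 μ1 + ENNReal.ofReal δ) :
    ∫ z, ‖g z - h z‖ ^ 2 ∂Γ ≤ W2 μ0 μ1 ^ 2 + δ := by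
  rw [integral_sqdist_eq hg hh hgm hhm h0 h1, sq_W2]
  have hfin : minCost 2 μ0 μ1 + ENNReal.ofReal δ ≠ ⊤ :=
    ENNReal.add_ne_top.2 ⟨(minCost_lt_top h0 h1).ne, ENNReal.ofReal_ne_top⟩
  have := ENNReal.toReal_mono hfin hle
  rwa [ENNReal.toReal_add (minCost_lt_top h0 h1).ne ENNReal.ofReal_ne_top,
    ENNReal.toReal_ofReal hδ] at this

lemma continuous_of_grad {F : Ed d → ℝ} {f' : Ed d → Ed d}
    (hFgrad : ∀ x, HasGradientAt F (f' x) x) : Continuous F :=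
  continuous_iff_continuousAt.2 fun x =>
    (hFgrad x).hasFDerivAt.differentiableAt.continuousAt

lemma abs_F_bound {F : Ed d → ℝ} {f' : Ed d → Ed d} {L : ℝ} (hL : 0 ≤ L)
    (hFconv : ConvexOn ℝ Set.univ F) (hFgrad : ∀ x, HasGradientAt F (f' x) x)
    (hLip : LipschitzWith L.toNNReal f') (w : Ed d) :
    |F w| ≤ |F 0| + ‖f' 0‖ * ‖w‖ + L / 2 * ‖w‖ ^ 2 := by
  have hup : F w ≤ F 0 + (inner ℝ (f' 0) (w - 0) : ℝ) + L / 2 * ‖w - 0‖ ^ 2 :=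
    descent_ineq hL hLip hFgrad 0 w
  have hlow : F 0 + (inner ℝ (f' 0) (w - 0) : ℝ) ≤ F w := grad_convex_ineq hFconv hFgrad 0 w
  rw [sub_zero] at hup hlow
  have hinner : |(inner ℝ (f' 0) w : ℝ)| ≤ ‖f' 0‖ * ‖w‖ := abs_real_inner_le_norm _ _
  have h2 := abs_le.1 hinner
  have hquad : 0 ≤ L / 2 * ‖w‖ ^ 2 := by positivity
  rw [abs_le]
  constructor
  · have := neg_abs_le (F 0)
    linarith
  · have := le_abs_self (F 0)
    linarith

lemma integrable_F_of_map [IsProbabilityMeasure Γ] {F : Ed d → ℝ} {f' : Ed d → Ed d} {L : ℝ}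
    (hL : 0 ≤ L) (hFconv : ConvexOn ℝ Set.univ F) (hFgrad : ∀ x, HasGradientAt F (f' x) x)
    (hLip : LipschitzWith L.toNNReal f') {g : α → Ed d} (hg : Measurable g)
    {μ0 : Measure (Ed d)} (hm : Γ.map g = μ0) (h0 : μ0 ∈ P2 d) :
    Integrable (fun z => F (g z)) Γ ∧ ∫ z, F (g z) ∂Γ = ∫ x, F x ∂μ0 := by
  have hFc : Continuous F := continuous_of_grad hFgrad
  have hi : Integrable (fun z => F (g z)) Γ := by
    have hb : Integrable (fun z => |F 0| + ‖f' 0‖ * ‖g z‖ + L / 2 * ‖g z‖ ^ 2) Γ :=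
      (((integrable_const _).add ((integrable_norm_of_map hg hm h0).const_mul _)).add
        ((integrable_sqnorm_of_map hg hm h0).const_mul _))
    refine hb.mono' ((hFc.measurable.comp hg).aestronglyMeasurable) ?_
    filter_upwards with z
    rw [Real.norm_eq_abs]
    exact abs_F_bound hL hFconv hFgrad hLip (g z)
  refine ⟨hi, ?_⟩
  rw [← hm, integral_map hg.aemeasurable]
  exact (hFc.aestronglyMeasurable)

end Bridges
section EVI
open MeasureTheory Filter Topology ENNReal
variable {d : ℕ}

lemma interp_identity_real (t : ℝ) (p q : Ed d) :
    ‖(1-t) • p + t • q‖ ^ 2 + (t*(1-t)) * ‖p - q‖ ^ 2 = (1-t) * ‖p‖ ^ 2 + t * ‖q‖ ^ 2 := by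
  have h1 : ‖(1-t) • p + t • q‖ ^ 2
      = (1-t)^2 * ‖p‖^2 + 2 * ((1-t) * t * inner ℝ p q) + t^2 * ‖q‖^2 := by
    rw [norm_add_sq_real, norm_smul, norm_smul, real_inner_smul_left, real_inner_smul_right]
    simp [Real.norm_eq_abs, mul_pow, sq_abs]
    ring
  have h2 : ‖p - q‖ ^ 2 = ‖p‖^2 - 2 * inner ℝ p q + ‖q‖^2 := norm_sub_sq_real p q
  rw [h1, h2]; ring

lemma interp_sq_identity {t : ℝ} (z : Ed d × Ed d × Ed d) :
    ‖((1-t) • z.2.1 + t • z.2.2) - z.1‖ ^ 2 + (t*(1-t)) * ‖z.2.1 - z.2.2‖ ^ 2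
      = (1-t) * ‖z.1 - z.2.1‖ ^ 2 + t * ‖z.1 - z.2.2‖ ^ 2 := by
  have key : ((1-t) • z.2.1 + t • z.2.2) - z.1
      = (1-t) • (z.2.1 - z.1) + t • (z.2.2 - z.1) := by
    rw [smul_sub, smul_sub]
    rw [show (1-t) • z.2.1 - (1-t) • z.1 + (t • z.2.2 - t • z.1)
        = (1-t) • z.2.1 + t • z.2.2 - ((1-t) • z.1 + t • z.1) by abel,
      ← add_smul]
    simp
  rw [key, show z.2.1 - z.2.2 = (z.2.1 - z.1) - (z.2.2 - z.1) by abel,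
    show ‖z.1 - z.2.1‖ = ‖z.2.1 - z.1‖ from norm_sub_rev _ _,
    show ‖z.1 - z.2.2‖ = ‖z.2.2 - z.1‖ from norm_sub_rev _ _]
  exact interp_identity_real t _ _

lemma gradStep_cont {f' : Ed d → Ed d} {L : ℝ} (hLip : LipschitzWith L.toNNReal f') (τ : ℝ) :
    Continuous (fun x : Ed d => x - τ • f' x) :=
  continuous_id.sub ((hLip.continuous).const_smul τ)

lemma gradStep_mem_P2 {f' : Ed d → Ed d} {L : ℝ} (hL : 0 ≤ L)
    (hLip : LipschitzWith L.toNNReal f') (τ : ℝ) {μ : Measure (Ed d)} (hμ : μ ∈ P2 d) :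
    gradStep f' τ μ ∈ P2 d := by
  apply map_mem_P2_of_linear_growth hμ (gradStep_cont hLip τ).measurable
    (a := |τ| * ‖f' 0‖) (b := 1 + |τ| * L)
  intro x
  have h1 : ‖f' x‖ ≤ ‖f' 0‖ + L * ‖x‖ := by
    have := lipschitz_grad_norm hL hLip x 0
    rw [sub_zero] at this
    have h := norm_sub_norm_le (f' x) (f' 0)
    linarith [this, h]
  calc ‖x - τ • f' x‖ ≤ ‖x‖ + ‖τ • f' x‖ := norm_sub_le _ _
    _ = ‖x‖ + |τ| * ‖f' x‖ := by rw [norm_smul]; rfl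
    _ ≤ ‖x‖ + |τ| * (‖f' 0‖ + L * ‖x‖) := by
        have : 0 ≤ |τ| := abs_nonneg τ
        nlinarith [h1]
    _ = |τ| * ‖f' 0‖ + (1 + |τ| * L) * ‖x‖ := by ring

/-- Extract data from a generalized geodesic. -/
lemma genGeodesic_data {curve : ℝ → Measure (Ed d)} {μ0 μ1 base : Measure (Ed d)}
    (hgeo : IsGenGeodesic curve μ0 μ1 base) :
    ∃ γ : Measure (Ed d × Ed d × Ed d), IsProbabilityMeasure γ ∧
      γ.map (fun z => z.1) = base ∧ γ.map (fun z => z.2.1) = μ0 ∧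
      γ.map (fun z => z.2.2) = μ1 ∧
      Wcost 2 (γ.map (fun z => (z.1, z.2.1))) = minCost 2 base μ0 ∧
      Wcost 2 (γ.map (fun z => (z.1, z.2.2))) = minCost 2 base μ1 ∧
      (∀ t ∈ Set.Icc (0:ℝ) 1, curve t = γ.map (fun z => (1 - t) • z.2.1 + t • z.2.2)) := by
  obtain ⟨γ, hγp, hp0, hp1, hc⟩ := hgeo
  have hz1 : Measurable fun z : Ed d × Ed d × Ed d => z.1 := measurable_fst
  have hz21 : Measurable fun z : Ed d × Ed d × Ed d => z.2.1 := measurable_fst.comp measurable_snd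
  have hz22 : Measurable fun z : Ed d × Ed d × Ed d => z.2.2 := measurable_snd.comp measurable_snd
  refine ⟨γ, hγp, ?_, ?_, ?_, hp0.2, hp1.2, hc⟩
  · rw [show (fun z : Ed d × Ed d × Ed d => z.1) = (Prod.fst ∘ fun z : Ed d × Ed d × Ed d => (z.1, z.2.1)) from rfl,
      ← Measure.map_map measurable_fst (hz1.prodMk hz21)]
    exact hp0.1.2.1
  · rw [show (fun z : Ed d × Ed d × Ed d => z.2.1) = (Prod.snd ∘ fun z : Ed d × Ed d × Ed d => (z.1, z.2.1)) from rfl,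
      ← Measure.map_map measurable_snd (hz1.prodMk hz21)]
    exact hp0.1.2.2
  · rw [show (fun z : Ed d × Ed d × Ed d => z.2.2) = (Prod.snd ∘ fun z : Ed d × Ed d × Ed d => (z.1, z.2.2)) from rfl,
      ← Measure.map_map measurable_snd (hz1.prodMk hz22)]
    exact hp1.1.2.2

lemma interp_measurable (t : ℝ) :
    Measurable (fun z : Ed d × Ed d × Ed d => (1 - t) • z.2.1 + t • z.2.2) :=
  ((measurable_fst.comp measurable_snd).const_smul (1-t)).add
    ((measurable_snd.comp measurable_snd).const_smul t)

/-- The EVI-type inequality satisfied by a JKO minimizer. -/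
lemma jko_evi {H : Measure (Ed d) → EReal} (hHproper : ProperOn H)
    (hHconv : ConvexAlongGenGeod H) {τ : ℝ} (hτ : 0 < τ)
    {η : Measure (Ed d)} (hη : η ∈ P2 d) {νs : Measure (Ed d)}
    (hmin : IsJKOMin H τ η νs) {ρ : Measure (Ed d)} (hρ : ρ ∈ P2 d) (hρfin : H ρ ≠ ⊤) :
    (H νs).toReal + 1/(2*τ) * W2 νs η ^ 2 + 1/(2*τ) * W2 νs ρ ^ 2
      ≤ (H ρ).toReal + 1/(2*τ) * W2 ρ η ^ 2 := by
  have hνsP2 := hmin.1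
  have hνsB := hHproper.1 νs
  have hρB := hHproper.1 ρ
  -- νs has finite energy
  have hνsfin : H νs ≠ ⊤ := by
    intro htop
    have := hmin.2 ρ hρ
    rw [JKOEnergy, JKOEnergy, htop] at this
    have hρne : H ρ + ((1 / (2 * τ) * W2 ρ η ^ 2 : ℝ) : EReal) ≠ ⊤ := by
      rw [show H ρ = (((H ρ).toReal : ℝ) : EReal) from (EReal.coe_toReal hρfin hρB).symm,
        ← EReal.coe_add]
      exact EReal.coe_ne_top _
    rw [EReal.top_add_coe] at this
    exact hρne (top_le_iff.1 this)
  -- get the generalized geodesic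
  obtain ⟨curve, hgeo, hconv⟩ := hHconv νs hνsP2 ρ hρ η hη
  obtain ⟨γ, hγp, hmb, hm0, hm1, hopt0, hopt1, hcurve⟩ := genGeodesic_data hgeo
  have hz1 : Measurable fun z : Ed d × Ed d × Ed d => z.1 := measurable_fst
  have hz21 : Measurable fun z : Ed d × Ed d × Ed d => z.2.1 := measurable_fst.comp measurable_snd
  have hz22 : Measurable fun z : Ed d × Ed d × Ed d => z.2.2 := measurable_snd.comp measurable_snd
  set s := 1/(2*τ) with hsdef
  have hs : 0 < s := by rw [hsdef]; positivity
  set a := (H νs).toReal with hadef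
  set r := (H ρ).toReal with hrdef
  set Creal := ∫ z : Ed d × Ed d × Ed d, ‖z.2.1 - z.2.2‖ ^ 2 ∂γ with hCdef
  have hCge : W2 νs ρ ^ 2 ≤ Creal := integral_sqdist_ge hz21 hz22 hm0 hm1 hνsP2 hρ
  -- fixed-w2 values
  have hW0 : ∫ z : Ed d × Ed d × Ed d, ‖z.1 - z.2.1‖ ^ 2 ∂γ = W2 νs η ^ 2 := by
    rw [integral_sqdist_eq hz1 hz21 hmb hm0 hη hνsP2, hopt0, ← sq_W2, W2_symm]
  have hW1 : ∫ z : Ed d × Ed d × Ed d, ‖z.1 - z.2.2‖ ^ 2 ∂γ = W2 ρ η ^ 2 := by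
    rw [integral_sqdist_eq hz1 hz22 hmb hm1 hη hρ, hopt1, ← sq_W2, W2_symm]
  -- the inequality for each t in (0,1]
  have hPt : ∀ t : ℝ, 0 < t → t ≤ 1 →
      a + s * W2 νs η ^ 2 + s * (1 - t) * Creal ≤ r + s * W2 ρ η ^ 2 := by
    intro t ht0 ht1
    have htI : t ∈ Set.Icc (0:ℝ) 1 := ⟨ht0.le, ht1⟩
    have hcurvet := hcurve t htI
    -- curve t ∈ P2
    have hcurveP2 : curve t ∈ P2 d := by
      rw [hcurvet]
      refine mem_P2_of_marginals hγp hz21 hz22 (interp_measurable t) hm0 hm1 hνsP2 hρ ?_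
      intro z
      calc ‖(1 - t) • z.2.1 + t • z.2.2‖ ≤ ‖(1-t) • z.2.1‖ + ‖t • z.2.2‖ := norm_add_le _ _
        _ = |1-t| * ‖z.2.1‖ + |t| * ‖z.2.2‖ := by rw [norm_smul, norm_smul]; rfl
        _ ≤ ‖z.2.1‖ + ‖z.2.2‖ := by
            rw [abs_of_nonneg (by linarith), abs_of_nonneg ht0.le]
            nlinarith [norm_nonneg z.2.1, norm_nonneg z.2.2]
    -- W2 cost along the curve
    have hintegrability0 := integrable_sqdist (interp_measurable t) hz1
      (hcurvet.symm) hmb hcurveP2 hη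
    have hintegrability1 := integrable_sqdist hz1 hz21 hmb hm0 hη hνsP2
    have hintegrability2 := integrable_sqdist hz1 hz22 hmb hm1 hη hρ
    have hintegrabilityC := integrable_sqdist hz21 hz22 hm0 hm1 hνsP2 hρ
    have hWt : W2 (curve t) η ^ 2 ≤ ∫ z : Ed d × Ed d × Ed d, ‖((1-t) • z.2.1 + t • z.2.2) - z.1‖ ^ 2 ∂γ :=
      integral_sqdist_ge (interp_measurable t) hz1 hcurvet.symm hmb hcurveP2 hη
    have hident : ∫ z : Ed d × Ed d × Ed d, ‖((1-t) • z.2.1 + t • z.2.2) - z.1‖ ^ 2 ∂γ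
        = (1-t) * W2 νs η ^ 2 + t * W2 ρ η ^ 2 - (t*(1-t)) * Creal := by
      have hpt : ∀ z : Ed d × Ed d × Ed d, ‖((1-t) • z.2.1 + t • z.2.2) - z.1‖ ^ 2
          = (1-t) * ‖z.1 - z.2.1‖ ^ 2 + t * ‖z.1 - z.2.2‖ ^ 2
            - (t*(1-t)) * ‖z.2.1 - z.2.2‖ ^ 2 := by
        intro z
        have := interp_sq_identity (t := t) z
        linarith
      rw [integral_congr_ae (Filter.Eventually.of_forall hpt)]
      have hI1 : Integrable (fun z : Ed d × Ed d × Ed d => (1-t) * ‖z.1 - z.2.1‖ ^ 2) γ :=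
        hintegrability1.const_mul _
      have hI2 : Integrable (fun z : Ed d × Ed d × Ed d => t * ‖z.1 - z.2.2‖ ^ 2) γ :=
        hintegrability2.const_mul _
      have hI12 : Integrable (fun z : Ed d × Ed d × Ed d =>
          (1-t) * ‖z.1 - z.2.1‖ ^ 2 + t * ‖z.1 - z.2.2‖ ^ 2) γ := hI1.add hI2
      have hIC : Integrable (fun z : Ed d × Ed d × Ed d => (t*(1-t)) * ‖z.2.1 - z.2.2‖ ^ 2) γ :=
        hintegrabilityC.const_mul _
      rw [integral_sub hI12 hIC, integral_add hI1 hI2,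
        MeasureTheory.integral_const_mul, MeasureTheory.integral_const_mul, MeasureTheory.integral_const_mul, hW0, hW1, ← hCdef]
    -- JKO minimality at curve t
    have hmint := hmin.2 (curve t) hcurveP2
    have hconvt := hconv t htI
    -- H (curve t) is finite
    have hcurveB := hHproper.1 (curve t)
    have hcurvefin : H (curve t) ≠ ⊤ := by
      intro htop
      rw [htop] at hconvt
      have : ((1 - t : ℝ) : EReal) * H νs + ((t:ℝ) : EReal) * H ρ ≠ ⊤ := by
        rw [show H νs = ((a : ℝ) : EReal) from (EReal.coe_toReal hνsfin hνsB).symm,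
          show H ρ = ((r : ℝ) : EReal) from (EReal.coe_toReal hρfin hρB).symm,
          ← EReal.coe_mul, ← EReal.coe_mul, ← EReal.coe_add]
        exact EReal.coe_ne_top _
      exact this (top_le_iff.1 hconvt)
    -- convert convexity to reals
    have hconvR : (H (curve t)).toReal ≤ (1-t) * a + t * r := by
      rw [show H νs = ((a : ℝ) : EReal) from (EReal.coe_toReal hνsfin hνsB).symm,
        show H ρ = ((r : ℝ) : EReal) from (EReal.coe_toReal hρfin hρB).symm,
        ← EReal.coe_mul, ← EReal.coe_mul, ← EReal.coe_add] at hconvt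
      have := EReal.toReal_le_toReal hconvt hcurveB (EReal.coe_ne_top _)
      rwa [EReal.toReal_coe] at this
    -- convert minimality to reals
    have hminR : a + s * W2 νs η ^ 2 ≤ (H (curve t)).toReal + s * W2 (curve t) η ^ 2 := by
      rw [JKOEnergy, JKOEnergy] at hmint
      have h1 : H νs + ((1 / (2 * τ) * W2 νs η ^ 2 : ℝ) : EReal) ≠ ⊥ := by
        rw [show H νs = ((a : ℝ) : EReal) from (EReal.coe_toReal hνsfin hνsB).symm,
          ← EReal.coe_add]
        exact EReal.coe_ne_bot _
      have h2 : H (curve t) + ((1 / (2 * τ) * W2 (curve t) η ^ 2 : ℝ) : EReal) ≠ ⊤ := by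
        rw [show H (curve t) = (((H (curve t)).toReal : ℝ) : EReal) from
          (EReal.coe_toReal hcurvefin hcurveB).symm, ← EReal.coe_add]
        exact EReal.coe_ne_top _
      have := EReal.toReal_le_toReal hmint h1 h2
      rw [EReal.toReal_add hνsfin hνsB (EReal.coe_ne_top _) (EReal.coe_ne_bot _),
        EReal.toReal_add hcurvefin hcurveB (EReal.coe_ne_top _) (EReal.coe_ne_bot _),
        EReal.toReal_coe, EReal.toReal_coe] at this
      exact this
    -- combine
    have hcomb : a + s * W2 νs η ^ 2
        ≤ (1-t) * a + t * r + s * ((1-t) * W2 νs η ^ 2 + t * W2 ρ η ^ 2 - (t*(1-t)) * Creal) := by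
      calc a + s * W2 νs η ^ 2 ≤ (H (curve t)).toReal + s * W2 (curve t) η ^ 2 := hminR
        _ ≤ (1-t) * a + t * r + s * ((1-t) * W2 νs η ^ 2 + t * W2 ρ η ^ 2 - (t*(1-t)) * Creal) := by
            have h3 : s * W2 (curve t) η ^ 2 ≤ s * ((1-t) * W2 νs η ^ 2 + t * W2 ρ η ^ 2 - (t*(1-t)) * Creal) := by
              apply mul_le_mul_of_nonneg_left _ hs.le
              rw [← hident]; exact hWt
            linarith [hconvR]
    -- divide by t
    have hdiv : t * (a + s * W2 νs η ^ 2 + s * (1-t) * Creal) ≤ t * (r + s * W2 ρ η ^ 2) := by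
      nlinarith [hcomb]
    have := le_of_mul_le_mul_left (by linarith [hdiv] : t * (a + s * W2 νs η ^ 2 + s * (1-t) * Creal) ≤ t * (r + s * W2 ρ η ^ 2)) ht0
    linarith [this]
  -- let t → 0
  have hlim : a + s * W2 νs η ^ 2 + s * Creal ≤ r + s * W2 ρ η ^ 2 := by
    have h0 : Tendsto (fun n : ℕ => 1/((n:ℝ)+2)) atTop (𝓝 0) := by
      have hat : Tendsto (fun n : ℕ => ((n:ℝ)+2)) atTop atTop :=
        tendsto_atTop_add_const_right _ 2 tendsto_natCast_atTop_atTop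
      simpa [one_div, Pi.inv_def] using hat.inv_tendsto_atTop
    have hseq : Tendsto (fun n : ℕ => a + s * W2 νs η ^ 2 + s * (1 - 1/((n:ℝ)+2)) * Creal)
        atTop (𝓝 (a + s * W2 νs η ^ 2 + s * 1 * Creal)) := by
      apply Tendsto.const_add
      apply Filter.Tendsto.mul_const
      apply Filter.Tendsto.const_mul
      simpa using tendsto_const_nhds.sub h0
    rw [mul_one] at hseq
    refine le_of_tendsto hseq (Filter.Eventually.of_forall fun n => ?_)
    have hn0 : (0:ℝ) < 1/(n+2 : ℝ) := by positivity
    have hn1 : 1/(n+2 : ℝ) ≤ 1 := by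
      rw [div_le_one (by positivity)]
      have : (0:ℝ) ≤ (n:ℝ) := Nat.cast_nonneg n
      linarith
    exact hPt _ hn0 hn1
  have h4 : s * W2 νs ρ ^ 2 ≤ s * Creal := mul_le_mul_of_nonneg_left hCge hs.le
  linarith

end EVI
section KeyStep
open MeasureTheory Filter Topology ENNReal
variable {d : ℕ}

lemma inner_four_identity (x u y w : Ed d) :
    2 * (inner ℝ (x - w) (u - y) : ℝ)
      = ‖x - y‖ ^ 2 + ‖u - w‖ ^ 2 - ‖u - x‖ ^ 2 - ‖y - w‖ ^ 2 := by
  simp only [norm_sub_sq_real, inner_sub_left, inner_sub_right]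
  have h1 := real_inner_comm x u
  have h2 := real_inner_comm x y
  have h3 := real_inner_comm w u
  have h4 := real_inner_comm w y
  have h5 := real_inner_comm u x
  have h6 := real_inner_comm y w
  ring_nf
  linarith [h1, h2, h3, h4]

lemma pointwise_key {F : Ed d → ℝ} {f' : Ed d → Ed d} {L τ : ℝ}
    (hFconv : ConvexOn ℝ Set.univ F) (hFgrad : ∀ x, HasGradientAt F (f' x) x)
    (hL : 0 ≤ L) (hLip : LipschitzWith L.toNNReal f') (hτ : 0 ≤ τ) (x u y : Ed d) :
    2 * τ * (F u - F y) ≤ ‖x - y‖ ^ 2 + ‖(x - τ • f' x) - u‖ ^ 2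
      - ‖u - x‖ ^ 2 - ‖y - (x - τ • f' x)‖ ^ 2 + τ * L * ‖u - x‖ ^ 2 := by
  set w := x - τ • f' x with hw
  have hdesc := descent_ineq hL hLip hFgrad x u
  have hconv := grad_convex_ineq hFconv hFgrad x y
  have hFdiff : F u - F y ≤ (inner ℝ (f' x) (u - y) : ℝ) + L / 2 * ‖u - x‖ ^ 2 := by
    have : (inner ℝ (f' x) (u - x) : ℝ) - (inner ℝ (f' x) (y - x) : ℝ)
        = (inner ℝ (f' x) (u - y) : ℝ) := by
      rw [← inner_sub_right]
      congr 1
      abel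
    linarith [hdesc, hconv, this.ge, this.le]
  have hxw : x - w = τ • f' x := by rw [hw]; abel
  have hid : 2 * τ * (inner ℝ (f' x) (u - y) : ℝ)
      = ‖x - y‖ ^ 2 + ‖u - w‖ ^ 2 - ‖u - x‖ ^ 2 - ‖y - w‖ ^ 2 := by
    have := inner_four_identity x u y w
    rw [hxw, real_inner_smul_left] at this
    linarith [this]
  have hmul : 2 * τ * (F u - F y)
      ≤ 2 * τ * ((inner ℝ (f' x) (u - y) : ℝ) + L / 2 * ‖u - x‖ ^ 2) := by
    apply mul_le_mul_of_nonneg_left hFdiff (by positivity)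
  have hnorm : ‖w - u‖ = ‖u - w‖ := norm_sub_rev _ _
  rw [hnorm]
  nlinarith [hmul, hid]

lemma jko_min_H_finite {H : Measure (Ed d) → EReal} (hHproper : ProperOn H)
    {τ : ℝ} {η νs : Measure (Ed d)} (hmin : IsJKOMin H τ η νs)
    {ρ : Measure (Ed d)} (hρ : ρ ∈ P2 d) (hρfin : H ρ ≠ ⊤) : H νs ≠ ⊤ := by
  intro htop
  have := hmin.2 ρ hρ
  rw [JKOEnergy, JKOEnergy, htop] at this
  have hρne : H ρ + ((1 / (2 * τ) * W2 ρ η ^ 2 : ℝ) : EReal) ≠ ⊤ := by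
    rw [show H ρ = (((H ρ).toReal : ℝ) : EReal) from
      (EReal.coe_toReal hρfin (hHproper.1 ρ)).symm, ← EReal.coe_add]
    exact EReal.coe_ne_top _
  rw [EReal.top_add_coe] at this
  exact hρne (top_le_iff.1 this)

lemma Gsum_toReal {F : Ed d → ℝ} {H : Measure (Ed d) → EReal} {μ : Measure (Ed d)}
    (hne : H μ ≠ ⊤) (hnb : H μ ≠ ⊥) :
    (Gsum F H μ).toReal = (∫ x, F x ∂μ) + (H μ).toReal := by
  rw [Gsum, EReal.toReal_add (EReal.coe_ne_top _) (EReal.coe_ne_bot _) hne hnb,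
    EReal.toReal_coe]

lemma Gsum_ne_top {F : Ed d → ℝ} {H : Measure (Ed d) → EReal} {μ : Measure (Ed d)}
    (hne : H μ ≠ ⊤) (hnb : H μ ≠ ⊥) : Gsum F H μ ≠ ⊤ ∧ Gsum F H μ ≠ ⊥ := by
  rw [Gsum, show H μ = (((H μ).toReal : ℝ) : EReal) from (EReal.coe_toReal hne hnb).symm,
    ← EReal.coe_add]
  exact ⟨EReal.coe_ne_top _, EReal.coe_ne_bot _⟩

set_option maxHeartbeats 1000000 in
/-- The key one-step contraction inequality. -/
lemma key_step {F : Ed d → ℝ} {f' : Ed d → Ed d}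
    (hFconv : ConvexOn ℝ Set.univ F) (hFgrad : ∀ x, HasGradientAt F (f' x) x)
    {L : ℝ} (hL : 0 < L) (hLip : LipschitzWith L.toNNReal f')
    {H : Measure (Ed d) → EReal} (hHproper : ProperOn H) (hHconv : ConvexAlongGenGeod H)
    {ν : Measure (Ed d)} (hν : IsArgminG (Gsum F H) ν) (hνfin : H ν ≠ ⊤)
    {τ : ℝ} (hτ0 : 0 < τ) (hτL : τ * L < 1)
    {μm : Measure (Ed d)} (hμm : μm ∈ P2 d)
    {νs : Measure (Ed d)} (hmin : IsJKOMin H τ (gradStep f' τ μm) νs) :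
    W2 νs ν ^ 2 + (1 - τ * L) * W2 νs μm ^ 2 ≤ W2 μm ν ^ 2 := by
  set ψ := fun x : Ed d => x - τ • f' x with hψdef
  have hψm : Measurable ψ := (gradStep_cont hLip τ).measurable
  set η := gradStep f' τ μm with hηdef
  have hηmap : η = μm.map ψ := rfl
  have hη : η ∈ P2 d := gradStep_mem_P2 hL.le hLip τ hμm
  have hνs : νs ∈ P2 d := hmin.1
  have hνP2 : ν ∈ P2 d := hν.1
  have hνsfin : H νs ≠ ⊤ := jko_min_H_finite hHproper hmin hνP2 hνfin
  -- EVI (multiplied by 2τ)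
  have hevi := jko_evi hHproper hHconv hτ0 hη hmin hνP2 hνfin
  -- δ-approximation for the F part
  have hmain : ∀ δ : ℝ, 0 < δ →
      W2 νs ν ^ 2 + (1 - τ * L) * W2 νs μm ^ 2 ≤ W2 μm ν ^ 2 + 2 * δ := by
    intro δ hδ
    obtain ⟨κ, hκc, hκle, hκfin⟩ := exists_near_opt hη hνs hδ
    obtain ⟨σ, hσp, hσfst, hσψ⟩ := pullback_coupling hμm.1 hψm hκc.1
      (by rw [hκc.2.1, hηmap])
    obtain ⟨π, hπc, hπle, hπfin⟩ := exists_near_opt hμm hνP2 hδ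
    obtain ⟨Γ, hΓp, hΓ12, hΓ13⟩ := glue_first hσp hπc.1 (by rw [hσfst, hπc.2.1])
    have hz1 : Measurable fun z : Ed d × Ed d × Ed d => z.1 := measurable_fst
    have hz21 : Measurable fun z : Ed d × Ed d × Ed d => z.2.1 := measurable_fst.comp measurable_snd
    have hz22 : Measurable fun z : Ed d × Ed d × Ed d => z.2.2 := measurable_snd.comp measurable_snd
    have hψz1 : Measurable fun z : Ed d × Ed d × Ed d => ψ z.1 := hψm.comp hz1
    have hψpair : Measurable fun p : Ed d × Ed d => (ψ p.1, p.2) :=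
      (hψm.comp measurable_fst).prodMk measurable_snd
    -- marginals
    have hmx : Γ.map (fun z => z.1) = μm := by
      rw [show (fun z : Ed d × Ed d × Ed d => z.1) = (Prod.fst ∘ fun z : Ed d × Ed d × Ed d => (z.1, z.2.1)) from rfl,
        ← Measure.map_map measurable_fst (hz1.prodMk hz21), hΓ12, hσfst]
    have hmu : Γ.map (fun z => z.2.1) = νs := by
      have hσsnd : σ.map Prod.snd = νs := by
        have : Prod.snd ∘ (fun p : Ed d × Ed d => (ψ p.1, p.2)) = Prod.snd := rfl
        rw [← hκc.2.2, ← hσψ, Measure.map_map measurable_snd hψpair, this]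
      rw [show (fun z : Ed d × Ed d × Ed d => z.2.1) = (Prod.snd ∘ fun z : Ed d × Ed d × Ed d => (z.1, z.2.1)) from rfl,
        ← Measure.map_map measurable_snd (hz1.prodMk hz21), hΓ12, hσsnd]
    have hmy : Γ.map (fun z => z.2.2) = ν := by
      rw [show (fun z : Ed d × Ed d × Ed d => z.2.2) = (Prod.snd ∘ fun z : Ed d × Ed d × Ed d => (z.1, z.2.2)) from rfl,
        ← Measure.map_map measurable_snd (hz1.prodMk hz22), hΓ13, hπc.2.2]
    have hmψ : Γ.map (fun z => ψ z.1) = η := by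
      rw [show (fun z : Ed d × Ed d × Ed d => ψ z.1) = (ψ ∘ fun z : Ed d × Ed d × Ed d => z.1) from rfl,
        ← Measure.map_map hψm hz1, hmx, hηmap]
    -- the (ψ x, u) pair pushforward equals κ
    have hpairκ : Γ.map (fun z => (ψ z.1, z.2.1)) = κ := by
      have hcomp : (fun p : Ed d × Ed d => (ψ p.1, p.2)) ∘ (fun z : Ed d × Ed d × Ed d => (z.1, z.2.1))
          = fun z : Ed d × Ed d × Ed d => (ψ z.1, z.2.1) := rfl
      rw [← hσψ, ← hΓ12, Measure.map_map hψpair (hz1.prodMk hz21), hcomp]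
    have hpairπ : Γ.map (fun z => (z.1, z.2.2)) = π := hΓ13
    -- integrability
    have hIxy := integrable_sqdist hz1 hz22 hmx hmy hμm hνP2
    have hIψu := integrable_sqdist hψz1 hz21 hmψ hmu hη hνs
    have hIux := integrable_sqdist hz21 hz1 hmu hmx hνs hμm
    have hIyψ := integrable_sqdist hz22 hψz1 hmy hmψ hνP2 hη
    have hIFu := integrable_F_of_map hL.le hFconv hFgrad hLip hz21 hmu hνs
    have hIFy := integrable_F_of_map hL.le hFconv hFgrad hLip hz22 hmy hνP2
    -- integrated pointwise inequality
    have hptwise : ∀ z : Ed d × Ed d × Ed d,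
        2 * τ * (F z.2.1 - F z.2.2) ≤ ‖z.1 - z.2.2‖ ^ 2 + ‖ψ z.1 - z.2.1‖ ^ 2
          - ‖z.2.1 - z.1‖ ^ 2 - ‖z.2.2 - ψ z.1‖ ^ 2 + τ * L * ‖z.2.1 - z.1‖ ^ 2 := by
      intro z
      exact pointwise_key hFconv hFgrad hL.le hLip hτ0.le z.1 z.2.1 z.2.2
    have hIFu' : Integrable (fun z : Ed d × Ed d × Ed d => F z.2.1) Γ := hIFu.1
    have hIFy' : Integrable (fun z : Ed d × Ed d × Ed d => F z.2.2) Γ := hIFy.1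
    have hIFsub : Integrable (fun z : Ed d × Ed d × Ed d => F z.2.1 - F z.2.2) Γ :=
      hIFu'.sub hIFy'
    have hIlhs : Integrable (fun z : Ed d × Ed d × Ed d => 2 * τ * (F z.2.1 - F z.2.2)) Γ :=
      hIFsub.const_mul _
    have hIa : Integrable (fun z : Ed d × Ed d × Ed d =>
        ‖z.1 - z.2.2‖ ^ 2 + ‖ψ z.1 - z.2.1‖ ^ 2) Γ := hIxy.add hIψu
    have hIb : Integrable (fun z : Ed d × Ed d × Ed d =>
        ‖z.1 - z.2.2‖ ^ 2 + ‖ψ z.1 - z.2.1‖ ^ 2 - ‖z.2.1 - z.1‖ ^ 2) Γ := hIa.sub hIux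
    have hIc : Integrable (fun z : Ed d × Ed d × Ed d =>
        ‖z.1 - z.2.2‖ ^ 2 + ‖ψ z.1 - z.2.1‖ ^ 2 - ‖z.2.1 - z.1‖ ^ 2
          - ‖z.2.2 - ψ z.1‖ ^ 2) Γ := hIb.sub hIyψ
    have hIe : Integrable (fun z : Ed d × Ed d × Ed d => τ * L * ‖z.2.1 - z.1‖ ^ 2) Γ :=
      hIux.const_mul _
    have hIrhs : Integrable (fun z : Ed d × Ed d × Ed d =>
        ‖z.1 - z.2.2‖ ^ 2 + ‖ψ z.1 - z.2.1‖ ^ 2 - ‖z.2.1 - z.1‖ ^ 2 - ‖z.2.2 - ψ z.1‖ ^ 2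
          + τ * L * ‖z.2.1 - z.1‖ ^ 2) Γ := hIc.add hIe
    have hint := integral_mono hIlhs hIrhs hptwise
    -- evaluate both sides
    rw [integral_add hIc hIe, integral_sub hIb hIyψ, integral_sub hIa hIux,
      integral_add hIxy hIψu, MeasureTheory.integral_const_mul,
      MeasureTheory.integral_const_mul, integral_sub hIFu' hIFy', hIFu.2, hIFy.2] at hint
    -- bounds for each integral
    have hxy_le : ∫ z : Ed d × Ed d × Ed d, ‖z.1 - z.2.2‖ ^ 2 ∂Γ ≤ W2 μm ν ^ 2 + δ :=
      integral_sqdist_le hz1 hz22 hmx hmy hμm hνP2 hδ.le (by rw [hpairπ]; exact hπle)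
    have hψu_le : ∫ z : Ed d × Ed d × Ed d, ‖ψ z.1 - z.2.1‖ ^ 2 ∂Γ ≤ W2 η νs ^ 2 + δ :=
      integral_sqdist_le hψz1 hz21 hmψ hmu hη hνs hδ.le (by rw [hpairκ]; exact hκle)
    have hux_ge : W2 νs μm ^ 2 ≤ ∫ z : Ed d × Ed d × Ed d, ‖z.2.1 - z.1‖ ^ 2 ∂Γ :=
      integral_sqdist_ge hz21 hz1 hmu hmx hνs hμm
    have hyψ_ge : W2 ν η ^ 2 ≤ ∫ z : Ed d × Ed d × Ed d, ‖z.2.2 - ψ z.1‖ ^ 2 ∂Γ :=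
      integral_sqdist_ge hz22 hψz1 hmy hmψ hνP2 hη
    -- the F-part inequality
    have hFpart : 2 * τ * ((∫ x, F x ∂νs) - ∫ x, F x ∂ν)
        ≤ W2 μm ν ^ 2 + W2 νs η ^ 2 - (1 - τ * L) * W2 νs μm ^ 2 - W2 ν η ^ 2 + 2 * δ := by
      have hτL' : τ * L ≤ 1 := hτL.le
      have h1 : (1 - τ * L) * W2 νs μm ^ 2
          ≤ (1 - τ * L) * ∫ z : Ed d × Ed d × Ed d, ‖z.2.1 - z.1‖ ^ 2 ∂Γ :=
        mul_le_mul_of_nonneg_left hux_ge (by linarith)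
      have hW2sym2 : W2 η νs ^ 2 = W2 νs η ^ 2 := by rw [W2_symm]
      linarith [hint, hxy_le, hψu_le, hyψ_ge, h1, hW2sym2]
    -- combine with EVI: multiply EVI by 2τ
    have hevi2 : 2 * τ * ((H νs).toReal - (H ν).toReal)
        ≤ W2 ν η ^ 2 - W2 νs η ^ 2 - W2 νs ν ^ 2 := by
      have h' : 1/(2*τ) * (W2 νs η ^ 2 + W2 νs ν ^ 2 - W2 ν η ^ 2)
          ≤ (H ν).toReal - (H νs).toReal := by linarith [hevi]
      have h'' := mul_le_mul_of_nonneg_left h' (le_of_lt (by positivity : (0:ℝ) < 2*τ))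
      rw [← mul_assoc, show 2*τ*(1/(2*τ)) = 1 from by field_simp, one_mul] at h''
      linarith [h'']
    -- optimality of ν
    have hGle : (Gsum F H ν).toReal ≤ (Gsum F H νs).toReal := by
      have := hν.2 νs hνs
      exact EReal.toReal_le_toReal this (Gsum_ne_top hνfin (hHproper.1 ν)).2
        (Gsum_ne_top hνsfin (hHproper.1 νs)).1
    rw [Gsum_toReal hνfin (hHproper.1 ν), Gsum_toReal hνsfin (hHproper.1 νs)] at hGle
    have hnn : 0 ≤ 2 * τ * ((∫ x, F x ∂νs) + (H νs).toReal
        - ((∫ x, F x ∂ν) + (H ν).toReal)) :=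
      mul_nonneg (by positivity) (by linarith)
    linarith [hFpart, hevi2, hnn]
  -- conclude by letting δ → 0
  by_contra hcon
  push_neg at hcon
  set ε := (W2 νs ν ^ 2 + (1 - τ * L) * W2 νs μm ^ 2) - W2 μm ν ^ 2 with hεdef
  have hε : 0 < ε := by rw [hεdef]; linarith
  have := hmain (ε/4) (by positivity)
  rw [hεdef] at this
  linarith

end KeyStep
section Final
open MeasureTheory Filter Topology ENNReal
variable {d : ℕ}

lemma quasi_fejer {a ε : ℕ → ℝ} (ha : ∀ n, 0 ≤ a n) (hε : ∀ n, 0 ≤ ε n)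
    (hsum : Summable ε) (hstep : ∀ n, a (n+1) ≤ a n + ε n) :
    ∃ l : ℝ, Tendsto a atTop (𝓝 l) := by
  set S := ∑' n, ε n with hS
  set s := fun n => ∑ i ∈ Finset.range n, ε i with hs
  have hsle : ∀ n, s n ≤ S := fun n => Summable.sum_le_tsum (Finset.range n) (fun i _ => hε i) hsum
  set c := fun n => a n - s n with hc
  have hanti : Antitone c := antitone_nat_of_succ_le fun n => by
    have h1 : s (n+1) = s n + ε n := Finset.sum_range_succ ε n
    have := hstep n
    simp only [hc]
    rw [h1]
    linarith
  have hbdd : BddBelow (Set.range c) := by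
    refine ⟨-S, fun x hx => ?_⟩
    obtain ⟨n, rfl⟩ := hx
    have := ha n
    have := hsle n
    simp only [hc]
    linarith
  have hctend : Tendsto c atTop (𝓝 (⨅ n, c n)) := tendsto_atTop_ciInf hanti hbdd
  have hstend : Tendsto s atTop (𝓝 S) := hsum.hasSum.tendsto_sum_nat
  refine ⟨(⨅ n, c n) + S, ?_⟩
  have : a = fun n => c n + s n := by funext n; simp [hc]
  rw [this]
  exact hctend.add hstend

theorem inexact_prox_grad_fejer' {d : ℕ}
    (F : Ed d → ℝ) (f' : Ed d → Ed d)
    (hFconv : ConvexOn ℝ Set.univ F)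
    (hFgrad : ∀ x, HasGradientAt F (f' x) x)
    (L : ℝ) (hL : 0 < L) (hLip : LipschitzWith L.toNNReal f')
    (H : Measure (Ed d) → EReal)
    (hHproper : ProperOn H) (hHlsc : LscW2 H) (hHconv : ConvexAlongGenGeod H)
    (hHdom : ∀ μ : Measure (Ed d), H μ ≠ ⊤ → μ ≪ (volume : Measure (Ed d)))
    (hArgmin : ∃ μstar, IsArgminG (Gsum F H) μstar)
    (J : ℝ → Measure (Ed d) → Measure (Ed d))
    (hJ : ∀ t : ℝ, 0 < t → ∀ η ∈ P2 d, IsJKOMin H t η (J t η))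
    (ε : ℕ → ℝ) (hε : ∀ n, 0 ≤ ε n) (hεsum : Summable ε)
    (τ : ℕ → ℝ) (hτ : ∀ n, 0 < τ n) (hτlt : ∀ n, τ n < 1 / L)
    (hτsup : ∃ S : ℝ, S < 1 / L ∧ ∀ n, τ n ≤ S)
    (μ : ℕ → Measure (Ed d)) (hμ : ∀ n, μ n ∈ P2 d)
    (herr : ∀ n, W2 (μ (n + 1)) (J (τ n) (gradStep f' (τ n) (μ n))) ≤ ε n) :
    (∀ ν, IsArgminG (Gsum F H) ν →
      (∃ a : ℝ, Tendsto (fun n => W2 (μ n) ν) atTop (𝓝 a)) ∧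
      (∃ b : ℝ, Tendsto (fun n => W2 (J (τ n) (gradStep f' (τ n) (μ n))) ν)
        atTop (𝓝 b)) ∧
      ∃ C : ℝ, 0 < C ∧ ∀ n, (W2 (μ (n + 1)) ν) ^ 2 ≤
        (W2 (J (τ n) (gradStep f' (τ n) (μ n))) ν) ^ 2 + C * ε n) ∧
    Tendsto (fun n => W2 (J (τ n) (gradStep f' (τ n) (μ n))) (μ n)) atTop (𝓝 0) := by
  -- common setup
  set T := fun n => J (τ n) (gradStep f' (τ n) (μ n)) with hTdef
  have hgsP2 : ∀ n, gradStep f' (τ n) (μ n) ∈ P2 d :=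
    fun n => gradStep_mem_P2 hL.le hLip (τ n) (hμ n)
  have hTmin : ∀ n, IsJKOMin H (τ n) (gradStep f' (τ n) (μ n)) (T n) :=
    fun n => hJ (τ n) (hτ n) _ (hgsP2 n)
  have hTP2 : ∀ n, T n ∈ P2 d := fun n => (hTmin n).1
  have hτL : ∀ n, τ n * L < 1 := fun n => by
    have := hτlt n
    calc τ n * L < (1/L) * L := by
          apply mul_lt_mul_of_pos_right this hL
      _ = 1 := by field_simp
  -- main per-argmin analysis
  have main : ∀ ν, IsArgminG (Gsum F H) ν →
      (∃ a : ℝ, Tendsto (fun n => W2 (μ n) ν) atTop (𝓝 a)) ∧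
      (∃ b : ℝ, Tendsto (fun n => W2 (T n) ν) atTop (𝓝 b)) ∧
      (∃ C : ℝ, 0 < C ∧ ∀ n, (W2 (μ (n + 1)) ν) ^ 2 ≤ (W2 (T n) ν) ^ 2 + C * ε n) ∧
      Tendsto (fun n => W2 (T n) (μ n)) atTop (𝓝 0) := by
    intro ν hνArg
    have hνP2 : ν ∈ P2 d := hνArg.1
    -- H ν finite
    obtain ⟨μ0, hμ0P2, hμ0fin⟩ := hHproper.2
    have hνfin : H ν ≠ ⊤ := by
      intro htop
      have hle := hνArg.2 μ0 hμ0P2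
      have h1 : Gsum F H ν = ⊤ := by
        rw [Gsum, htop]
        exact EReal.coe_add_top _
      rw [h1] at hle
      exact (Gsum_ne_top hμ0fin (hHproper.1 μ0)).1 (top_le_iff.1 hle)
    -- key step per n
    have hkey : ∀ n, W2 (T n) ν ^ 2 + (1 - τ n * L) * W2 (T n) (μ n) ^ 2
        ≤ W2 (μ n) ν ^ 2 :=
      fun n => key_step hFconv hFgrad hL hLip hHproper hHconv hνArg hνfin
        (hτ n) (hτL n) (hμ n) (hTmin n)
    set a := fun n => W2 (μ n) ν with hadef
    set b := fun n => W2 (T n) ν with hbdef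
    have ha0 : ∀ n, 0 ≤ a n := fun n => W2_nonneg _ _
    have hb0 : ∀ n, 0 ≤ b n := fun n => W2_nonneg _ _
    -- Fejér property
    have hba : ∀ n, b n ≤ a n := by
      intro n
      have h1 : 0 ≤ (1 - τ n * L) * W2 (T n) (μ n) ^ 2 :=
        mul_nonneg (by linarith [hτL n]) (sq_nonneg _)
      have h2 : b n ^ 2 ≤ a n ^ 2 := by
        have := hkey n; simp only [hadef, hbdef]; linarith
      exact (pow_le_pow_iff_left₀ (hb0 n) (ha0 n) (by norm_num)).1 h2
    -- triangle step
    have htri : ∀ n, a (n+1) ≤ b n + ε n := by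
      intro n
      have h1 : W2 (μ (n+1)) ν ≤ W2 (μ (n+1)) (T n) + W2 (T n) ν :=
        W2_triangle (hμ (n+1)) (hTP2 n) hνP2
      have h2 := herr n
      simp only [hadef, hbdef]
      calc W2 (μ (n+1)) ν ≤ W2 (μ (n+1)) (T n) + W2 (T n) ν := h1
        _ ≤ ε n + W2 (T n) ν := by linarith [h2]
        _ = W2 (T n) ν + ε n := by ring
    have hstep : ∀ n, a (n+1) ≤ a n + ε n := fun n => (htri n).trans (by linarith [hba n])
    -- convergence of a
    obtain ⟨l, hal⟩ := quasi_fejer ha0 hε hεsum hstep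
    -- ε → 0
    have hε0 : Tendsto ε atTop (𝓝 0) := hεsum.tendsto_atTop_zero
    -- b converges to the same limit via squeeze
    have hbl : Tendsto b atTop (𝓝 l) := by
      have hlow : Tendsto (fun n => a (n+1) - ε n) atTop (𝓝 (l - 0)) :=
        ((hal.comp (tendsto_add_atTop_nat 1)).sub hε0)
      rw [sub_zero] at hlow
      refine tendsto_of_tendsto_of_tendsto_of_le_of_le hlow hal ?_ ?_
      · intro n; dsimp only; linarith [htri n]
      · intro n; exact hba n
    -- boundedness and the C-inequality
    set S := ∑' n, ε n with hS
    have hS0 : 0 ≤ S := tsum_nonneg hε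
    have haB' : ∀ n, a n ≤ a 0 + ∑ i ∈ Finset.range n, ε i := by
      intro n
      induction n with
      | zero => simp
      | succ k ih =>
          have h1 := hstep k
          rw [Finset.sum_range_succ]
          linarith
    have haB : ∀ n, a n ≤ a 0 + S := fun n =>
      (haB' n).trans (by
        have := Summable.sum_le_tsum (Finset.range n) (fun i _ => hε i) hεsum
        linarith)
    set M := a 0 + S with hM
    have hbB : ∀ n, b n ≤ M := fun n => (hba n).trans (haB n)
    have hεS : ∀ n, ε n ≤ S := fun n => Summable.le_tsum hεsum n (fun i _ => hε i)
    have hM0 : 0 ≤ M := le_trans (ha0 0) (haB 0)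
    -- the C inequality
    have hCpart : ∃ C : ℝ, 0 < C ∧ ∀ n, a (n+1) ^ 2 ≤ b n ^ 2 + C * ε n := by
      refine ⟨2 * M + S + 1, by linarith, fun n => ?_⟩
      have h1 : a (n+1) ^ 2 ≤ (b n + ε n) ^ 2 :=
        pow_le_pow_left₀ (ha0 _) (htri n) 2
      nlinarith [hb0 n, hε n, hbB n, hεS n]
    -- asymptotic regularity
    obtain ⟨S', hS'lt, hτle⟩ := hτsup
    have hδ0 : 0 < 1 - S' * L := by
      have : S' * L < (1/L) * L := mul_lt_mul_of_pos_right hS'lt hL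
      rw [one_div, inv_mul_cancel₀ hL.ne'] at this
      linarith
    set δ0 := 1 - S' * L with hδ0def
    set c := fun n => W2 (T n) (μ n) with hcdef
    have hc0 : ∀ n, 0 ≤ c n := fun n => W2_nonneg _ _
    have hcsq : ∀ n, c n ^ 2 ≤ (a n ^ 2 - b n ^ 2) / δ0 := by
      intro n
      have h1 : δ0 ≤ 1 - τ n * L := by
        have : τ n * L ≤ S' * L := mul_le_mul_of_nonneg_right (hτle n) hL.le
        simp only [hδ0def]
        linarith
      have h2 := hkey n
      have h3 : δ0 * c n ^ 2 ≤ (1 - τ n * L) * c n ^ 2 :=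
        mul_le_mul_of_nonneg_right h1 (sq_nonneg _)
      rw [le_div_iff₀ hδ0]
      simp only [hcdef, hadef, hbdef] at *
      nlinarith [h2, h3]
    have hdiff : Tendsto (fun n => (a n ^ 2 - b n ^ 2) / δ0) atTop (𝓝 ((l^2 - l^2) / δ0)) :=
      ((hal.pow 2).sub (hbl.pow 2)).div_const δ0
    rw [sub_self, zero_div] at hdiff
    have hcsq0 : Tendsto (fun n => c n ^ 2) atTop (𝓝 0) :=
      tendsto_of_tendsto_of_tendsto_of_le_of_le tendsto_const_nhds hdiff
        (fun n => sq_nonneg _) hcsq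
    have hc : Tendsto c atTop (𝓝 0) := by
      have h1 : (fun n => Real.sqrt (c n ^ 2)) = c := by
        funext n; exact Real.sqrt_sq (hc0 n)
      have h2 := hcsq0.sqrt
      rw [Real.sqrt_zero] at h2
      rwa [h1] at h2
    exact ⟨⟨l, hal⟩, ⟨l, hbl⟩, hCpart, hc⟩
  refine ⟨fun ν hν => ⟨(main ν hν).1, (main ν hν).2.1, (main ν hν).2.2.1⟩, ?_⟩
  obtain ⟨μstar, hstar⟩ := hArgmin
  exact (main μstar hstar).2.2.2

end Final
/-- Quasi-Fejér properties and asymptotic regularity of the inexact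
proximal-gradient scheme with distance-type errors. -/
theorem inexact_prox_grad_fejer {d : ℕ}
    (F : Ed d → ℝ) (f' : Ed d → Ed d)
    (hFconv : ConvexOn ℝ Set.univ F)
    (hFgrad : ∀ x, HasGradientAt F (f' x) x)
    (L : ℝ) (hL : 0 < L) (hLip : LipschitzWith L.toNNReal f')
    (H : Measure (Ed d) → EReal)
    (hHproper : ProperOn H) (hHlsc : LscW2 H) (hHconv : ConvexAlongGenGeod H)
    (hHdom : ∀ μ : Measure (Ed d), H μ ≠ ⊤ → μ ≪ (volume : Measure (Ed d)))
    (hArgmin : ∃ μstar, IsArgminG (Gsum F H) μstar)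
    (J : ℝ → Measure (Ed d) → Measure (Ed d))
    (hJ : ∀ t : ℝ, 0 < t → ∀ η ∈ P2 d, IsJKOMin H t η (J t η))
    (ε : ℕ → ℝ) (hε : ∀ n, 0 ≤ ε n) (hεsum : Summable ε)
    (τ : ℕ → ℝ) (hτ : ∀ n, 0 < τ n) (hτlt : ∀ n, τ n < 1 / L)
    (hτsup : ∃ S : ℝ, S < 1 / L ∧ ∀ n, τ n ≤ S)
    (μ : ℕ → Measure (Ed d)) (hμ : ∀ n, μ n ∈ P2 d)
    (herr : ∀ n, W2 (μ (n + 1)) (J (τ n) (gradStep f' (τ n) (μ n))) ≤ ε n) :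
    (∀ ν, IsArgminG (Gsum F H) ν →
      (∃ a : ℝ, Tendsto (fun n => W2 (μ n) ν) atTop (𝓝 a)) ∧
      (∃ b : ℝ, Tendsto (fun n => W2 (J (τ n) (gradStep f' (τ n) (μ n))) ν)
        atTop (𝓝 b)) ∧
      ∃ C : ℝ, 0 < C ∧ ∀ n, (W2 (μ (n + 1)) ν) ^ 2 ≤
        (W2 (J (τ n) (gradStep f' (τ n) (μ n))) ν) ^ 2 + C * ε n) ∧
    Tendsto (fun n => W2 (J (τ n) (gradStep f' (τ n) (μ n))) (μ n)) atTop (𝓝 0) := by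
  exact inexact_prox_grad_fejer' F f' hFconv hFgrad L hL hLip H hHproper hHlsc hHconv
    hHdom hArgmin J hJ ε hε hεsum τ hτ hτlt hτsup μ hμ herr
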